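/- arXiv:2401.17845 — 7 statements merged into one kernel-verified Lean document; each statement's English description precedes it below -/
import Mathlib

section
/- Let G be a simple graph on n vertices with more than (n-1 choose 2) + 1 edges. Then G is Hamiltonian. -/
open SimpleGraph

/-- `K_1 ∨ (K_{n-2} ∪ K_1)` on `Fin n`: vertex `0` is dominating, vertices
`0,…,n-2` form a clique, and vertex `n-1` is adjacent only to `0`. -/
def Gstar (n : ℕ) : SimpleGraph (Fin n) where
  Adj x y := x ≠ y ∧ (x.val = 0 ∨ y.val = 0 ∨ (x.val ≠ n - 1 ∧ y.val ≠ n - 1))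
  symm := by constructor; intro x y h; tauto
  loopless := by constructor; intro x h; exact h.1 rfl

/-- `K_2 ∨ 3K_1` on `Fin 5`: vertices `0,1` are adjacent to everything. -/
def K2join3K1 : SimpleGraph (Fin 5) where
  Adj x y := x ≠ y ∧ (x.val < 2 ∨ y.val < 2)
  symm := by constructor; intro x y h; tauto
  loopless := by constructor; intro x h; exact h.1 rfl

/-- `K_{n-1} ∪ K_1` on `Fin n`: vertex `n-1` is isolated, the rest form a clique. -/
def KcupK1 (n : ℕ) : SimpleGraph (Fin n) where
  Adj x y := x ≠ y ∧ x.val ≠ n - 1 ∧ y.val ≠ n - 1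
  symm := by constructor; intro x y h; tauto
  loopless := by constructor; intro x h; exact h.1 rfl

/-- The real adjacency matrix of a graph. -/
noncomputable def adjMat {V : Type*} [Fintype V] (G : SimpleGraph V) : Matrix V V ℝ :=
  letI := Classical.decRel G.Adj
  G.adjMatrix ℝ

lemma adjMat_isHermitian {V : Type*} [Fintype V] (G : SimpleGraph V) :
    (adjMat G).IsHermitian := by
  letI := Classical.decRel G.Adj
  ext i j
  simp [adjMat, Matrix.conjTranspose_apply, SimpleGraph.adjMatrix, G.adj_comm i j]

/-- The adjacency spectral radius of a graph, i.e. the largest eigenvalue of its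
adjacency matrix. -/
noncomputable def specRad {V : Type*} [Fintype V] [DecidableEq V] (G : SimpleGraph V) : ℝ :=
  ⨆ i, (adjMat_isHermitian G).eigenvalues i

/-- The signless Laplacian matrix `D + A` of a graph. -/
noncomputable def signlessLap {V : Type*} [Fintype V] [DecidableEq V] (G : SimpleGraph V) :
    Matrix V V ℝ :=
  letI := Classical.decRel G.Adj
  Matrix.diagonal (fun v => (G.degree v : ℝ)) + adjMat G

lemma signlessLap_isHermitian {V : Type*} [Fintype V] [DecidableEq V] (G : SimpleGraph V) :
    (signlessLap G).IsHermitian := by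
  letI := Classical.decRel G.Adj
  have h1 : (Matrix.diagonal (fun v => (G.degree v : ℝ))).IsHermitian :=
    Matrix.isHermitian_diagonal _
  exact h1.add (adjMat_isHermitian G)

/-- The signless Laplacian spectral radius of a graph. -/
noncomputable def specRadS {V : Type*} [Fintype V] [DecidableEq V] (G : SimpleGraph V) : ℝ :=
  ⨆ i, (signlessLap_isHermitian G).eigenvalues i

/-- `z` is a neighbor of `y` outside of `N(x) ∪ {x}`. -/
def kelSet {V : Type*} (G : SimpleGraph V) (x y z : V) : Prop :=
  G.Adj y z ∧ ¬ G.Adj x z ∧ z ≠ x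

/-- The Kelmans transformation of `G` from `x` to `y`: erase all edges between `y`
and `N(y) \ (N(x) ∪ {x})` and add all edges between `x` and `N(y) \ (N(x) ∪ {x})`. -/
def kelmans {V : Type*} (G : SimpleGraph V) (x y : V) : SimpleGraph V where
  Adj a b :=
    (G.Adj a b ∧ ¬(a = y ∧ kelSet G x y b) ∧ ¬(b = y ∧ kelSet G x y a)) ∨
    (a = x ∧ kelSet G x y b) ∨ (b = x ∧ kelSet G x y a)
  symm := by constructor; intro a b h; tauto
  loopless := by
    constructor
    intro a h
    rcases h with ⟨h, -, -⟩ | ⟨rfl, h⟩ | ⟨rfl, h⟩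
    · exact G.loopless.irrefl a h
    · exact h.2.2 rfl
    · exact h.2.2 rfl

/-- A family `𝒢` of `n` graphs on the vertex set `Fin n` admits a rainbow Hamiltonian
cycle: there is a Hamiltonian cycle (in the complete graph) whose edges can be
assigned distinct indices `i` such that each edge belongs to the graph `𝒢 i`. -/
def HasRainbowHamCycle {n : ℕ} (𝒢 : Fin n → SimpleGraph (Fin n)) : Prop :=
  ∃ (v : Fin n) (p : (⊤ : SimpleGraph (Fin n)).Walk v v),
    p.IsHamiltonianCycle ∧
    ∃ c : Fin p.edges.length → Fin n,
      Function.Injective c ∧ ∀ i, p.edges.get i ∈ (𝒢 (c i)).edgeSet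

open List

variable {V : Type*} {G : SimpleGraph V}

section OreAux

/-- Build a walk from a chain list. -/
def listWalk : (a b : V) → (l : List V) → List.Chain G.Adj a (l ++ [b]) → G.Walk a b
  | _, _, [], h => Walk.cons (List.chain_cons.mp h).1 Walk.nil
  | a, b, c :: l, h => Walk.cons (List.chain_cons.mp h).1 (listWalk c b l (List.chain_cons.mp h).2)

lemma listWalk_support (a b : V) (l : List V) (h : List.Chain G.Adj a (l ++ [b])) :
    (listWalk a b l h).support = a :: (l ++ [b]) := by
  induction l generalizing a with
  | nil => simp [listWalk]
  | cons c l ih => simp [listWalk, ih]; exact ih _ _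

lemma listWalk_edges_end (a b : V) (c : V) (l : List V) (h : List.Chain G.Adj c (l ++ [a]))
    (ha : a ∉ c :: l) (hmem : s(a, b) ∈ (listWalk c a l h).edges) :
    b = (c :: l).getLast (List.cons_ne_nil c l) := by
  induction l generalizing c with
  | nil =>
    simp [listWalk] at hmem ⊢
    rcases hmem with ⟨rfl, rfl⟩ | ⟨rfl, rfl⟩
    · simp at ha
    · rfl
  | cons d l ih =>
    simp only [listWalk, Walk.edges_cons, List.mem_cons] at hmem
    rcases hmem with h1 | h2
    · exfalso
      rw [Sym2.eq_iff] at h1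
      rcases h1 with ⟨rfl, rfl⟩ | ⟨rfl, rfl⟩ <;> simp at ha
    · rw [List.getLast_cons (List.cons_ne_nil d l)]
      exact ih d _ (fun hd => ha (List.mem_cons_of_mem _ hd)) h2

/-- A cyclic list representation of a Hamiltonian cycle. -/
def CycList (G : SimpleGraph V) (a : V) (l : List V) : Prop :=
  List.Chain G.Adj a (l ++ [a]) ∧ (a :: l).Nodup ∧ ∀ v : V, v ∈ a :: l

lemma CycList.isHamiltonian [DecidableEq V] [Fintype V] (hcard : 3 ≤ Fintype.card V)
    {a : V} {l : List V} (hc : CycList G a l) : G.IsHamiltonian := by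
  obtain ⟨hchain, hnd, hmem⟩ := hc
  have hlen : (a :: l).length = Fintype.card V := by
    have : (a :: l).toFinset = Finset.univ := by
      ext x; simpa using hmem x
    rw [← List.toFinset_card_of_nodup hnd, this, Finset.card_univ]
  obtain ⟨b, l', rfl⟩ : ∃ b l', l = b :: l' := by
    cases l with
    | nil => exfalso; simp at hlen; omega
    | cons b l' => exact ⟨b, l', rfl⟩
  have hl' : l' ≠ [] := by
    intro h; subst h; simp at hlen; omega
  rw [List.cons_append, List.Chain, List.chain_cons] at hchain
  obtain ⟨hab, hchain⟩ := hchain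
  set q : G.Walk b a := listWalk b a l' hchain with hq
  have hqsupp : q.support = b :: (l' ++ [a]) := listWalk_support _ _ _ _
  have hnd' : (b :: (l' ++ [a])).Nodup := by
    have hp : (a :: (b :: l')).Perm (b :: (l' ++ [a])) := by
      have : b :: (l' ++ [a]) = (b :: l') ++ [a] := by simp
      rw [this]
      exact (List.perm_append_singleton a (b :: l')).symm
    exact hp.nodup hnd
  have hqpath : q.IsPath := by
    rw [Walk.isPath_def, hqsupp]; exact hnd'
  have hedge : s(a, b) ∉ q.edges := by
    intro hmem'
    have hb : b = (b :: l').getLast (List.cons_ne_nil b l') := by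
      refine listWalk_edges_end a b b l' hchain ?_ hmem'
      intro hmem''
      simp only [List.mem_cons] at hmem''
      simp at hnd
      tauto
    rw [List.getLast_cons hl'] at hb
    have : b ∈ l' := hb ▸ List.getLast_mem hl'
    simp at hnd; tauto
  set w : G.Walk a a := Walk.cons hab q with hw
  have hcyc : w.IsCycle := (Walk.cons_isCycle_iff q hab).mpr ⟨hqpath, hedge⟩
  refine fun _ => ⟨a, w, hcyc, ?_⟩
  intro v
  rw [Walk.support_tail_of_not_nil w hcyc.not_nil]
  have : w.support = a :: (b :: (l' ++ [a])) := by
    rw [hw, Walk.support_cons, hqsupp]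
  rw [this]
  simp only [List.tail_cons]
  have hvmem : v ∈ b :: (l' ++ [a]) := by
    have := hmem v
    simp at this ⊢; tauto
  exact List.count_eq_one_of_mem hnd' hvmem

lemma walk_support_getLast? {a b : V} (p : G.Walk a b) :
    p.support.getLast? = some b := by
  induction p with
  | nil => rfl
  | cons h q ih =>
    rw [Walk.support_cons, List.getLast?_cons, ih]
    simp

lemma IsHamiltonianCycle.rotate [DecidableEq V] {a u : V} {p : G.Walk a a}
    (hp : p.IsHamiltonianCycle) (hu : u ∈ p.support) :
    (p.rotate u hu).IsHamiltonianCycle := by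
  refine ⟨hp.isCycle.rotate hu, ?_⟩
  have hrot := SimpleGraph.Walk.support_rotate p u hu
  intro v
  rw [Walk.support_tail_of_not_nil _ (hp.isCycle.rotate hu).not_nil]
  rw [hrot.perm.count_eq]
  rw [← Walk.support_tail_of_not_nil _ hp.isCycle.not_nil]
  exact hp.isHamiltonian_tail v

lemma hamCycle_to_cycList [DecidableEq V] {a : V} {p : G.Walk a a}
    (hp : p.IsHamiltonianCycle) : ∃ l, CycList G a l := by
  have hnn := hp.isCycle.not_nil
  have htne : p.support.tail ≠ [] := by
    have h2 := SimpleGraph.Walk.support_ne_nil p.tail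
    rw [Walk.support_tail_of_not_nil p hnn] at h2
    exact h2
  set l : List V := p.support.tail.dropLast with hl
  have hlast : p.support.tail.getLast htne = a := by
    have h1 := List.getLast?_eq_getLast htne
    have h2 := walk_support_getLast? p
    rw [Walk.support_eq_cons p, List.getLast?_cons, h1] at h2
    simpa using h2
  have hsplit : l ++ [a] = p.support.tail := by
    conv_rhs => rw [← List.dropLast_append_getLast htne]
    rw [hlast]
  refine ⟨l, ?_, ?_, ?_⟩
  · have hc := SimpleGraph.Walk.isChain_adj_support p
    rw [Walk.support_eq_cons p, ← hsplit] at hc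
    exact hc
  · have hnd := hp.isCycle.support_nodup
    rw [← hsplit] at hnd
    have hp2 : (l ++ [a]).Perm (a :: l) := List.perm_append_singleton a l
    exact hp2.nodup hnd
  · intro v
    have hv := hp.mem_support v
    rw [Walk.support_eq_cons p, ← hsplit] at hv
    simp at hv ⊢
    tauto



lemma chain_concat {R : V → V → Prop} {b : V} :
    ∀ {a : V} (l : List V), Chain R a l → R ((a :: l).getLast (List.cons_ne_nil a l)) b →
      Chain R a (l ++ [b])
  | a, [], _, hr => by simpa [List.Chain] using List.chain_cons.mpr ⟨hr, List.Chain.nil⟩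
  | a, c :: l, hc, hr => by
    rw [List.Chain, List.chain_cons] at hc
    rw [List.cons_append, List.Chain, List.chain_cons]
    exact ⟨hc.1, chain_concat l hc.2 (by rwa [List.getLast_cons (List.cons_ne_nil c l)] at hr)⟩


lemma pathList_cycList [Fintype V] [DecidableEq V] [DecidableRel G.Adj]
    (hcard : 3 ≤ Fintype.card V)
    (hore : ∀ x y : V, x ≠ y → ¬G.Adj x y → Fintype.card V ≤ G.degree x + G.degree y)
    (l : List V) (hchain : l.Chain' G.Adj) (hnd : l.Nodup) (hmem : ∀ v : V, v ∈ l) :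
    ∃ a c, CycList G a c := by
  have hlen : l.length = Fintype.card V := by
    have : l.toFinset = Finset.univ := by ext x; simpa using hmem x
    rw [← List.toFinset_card_of_nodup hnd, this, Finset.card_univ]
  have hpos : 0 < l.length := by omega
  have hne : l ≠ [] := List.ne_nil_of_length_pos hpos
  set u : V := l.head hne with hu
  set v : V := l.getLast hne with hv
  have hu0 : l.get ⟨0, hpos⟩ = u := by
    rw [hu]; exact (List.get_mk_zero hpos)
  have hvlast : l.get ⟨l.length - 1, by omega⟩ = v := by
    rw [hv, List.getLast_eq_getElem]; rfl
  have hgetinj : Function.Injective l.get := List.nodup_iff_injective_get.mp hnd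
  have huv : u ≠ v := by
    intro h
    have : (⟨0, hpos⟩ : Fin l.length) = ⟨l.length - 1, by omega⟩ := hgetinj (by rw [hu0, hvlast, h])
    have := Fin.mk.injEq .. ▸ this
    omega
  by_cases hadj : G.Adj v u
  · -- close the path directly
    refine ⟨u, l.tail, ?_, ?_, ?_⟩
    · have hc : Chain G.Adj u l.tail := by
        have h2 := hchain
        rw [← List.cons_head_tail hne] at h2
        exact h2
      refine chain_concat _ hc ?_
      rwa [show (u :: l.tail).getLast (List.cons_ne_nil _ _) = v by
        rw [hv]; congr 1; exact List.cons_head_tail hne]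
    · rw [List.cons_head_tail hne]; exact hnd
    · intro w; rw [List.cons_head_tail hne]; exact hmem w
  · -- Ore + pigeonhole + splice
    have hdeg := hore v u (Ne.symm huv) hadj
    have hadj' : ¬G.Adj u v := fun h => hadj h.symm
    set S : Finset (Fin l.length) :=
      Finset.univ.filter (fun i => G.Adj u (l.get i)) with hS
    set T : Finset (Fin l.length) :=
      Finset.univ.filter (fun i => 0 < i.val ∧
        G.Adj (l.get ⟨i.val - 1, by omega⟩) v) with hT
    have hcardS : S.card = G.degree u := by
      rw [← card_neighborFinset_eq_degree]
      refine Finset.card_bij (fun i _ => l.get i) ?_ ?_ ?_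
      · intro i hi; rw [hS] at hi; simp at hi; simpa using hi
      · intro i hi j hj hij; exact hgetinj hij
      · intro w hw
        simp at hw
        obtain ⟨i, hi⟩ := List.mem_iff_get.mp (hmem w)
        refine ⟨i, ?_, hi⟩
        rw [hS]
        simp only [Finset.mem_filter, Finset.mem_univ, true_and]
        show G.Adj u (l.get i)
        rw [hi]; exact hw
    have hcardT : T.card = G.degree v := by
      rw [← card_neighborFinset_eq_degree]
      refine Finset.card_bij (fun i hi => l.get ⟨i.val - 1, by omega⟩) ?_ ?_ ?_
      · intro i hi; rw [hT] at hi; simp at hi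
        simp only [SimpleGraph.mem_neighborFinset]
        exact hi.2.symm
      · intro i hi j hj hij
        rw [hT] at hi hj; simp at hi hj
        have := hgetinj hij
        have h2 := Fin.mk.injEq .. ▸ this
        apply Fin.ext
        omega
      · intro w hw
        simp only [SimpleGraph.mem_neighborFinset] at hw
        obtain ⟨j, hj⟩ := List.mem_iff_get.mp (hmem w)
        have hwv : w ≠ v := fun h => G.irrefl (h ▸ hw)
        have hjne : j.val ≠ l.length - 1 := by
          intro h
          apply hwv
          rw [← hj, ← hvlast]
          congr 1
          exact Fin.ext h
        refine ⟨⟨j.val + 1, by omega⟩, ?_, ?_⟩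
        · rw [hT]
          simp only [Finset.mem_filter, Finset.mem_univ, true_and]
          refine ⟨by omega, ?_⟩
          show G.Adj (l.get j) v
          rw [hj]
          exact hw.symm
        · show l.get j = w
          exact hj
    -- pigeonhole
    have hST0 : ∀ i ∈ S ∪ T, 0 < i.val := by
      intro i hi
      rcases Finset.mem_union.mp hi with h | h
      · rw [hS] at h
        have h' := (Finset.mem_filter.mp h).2
        rcases Nat.eq_zero_or_pos i.val with h0 | h0
        · exfalso
          have hieq : i = ⟨0, hpos⟩ := Fin.ext h0
          rw [hieq, hu0] at h'
          exact G.irrefl h'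
        · exact h0
      · rw [hT] at h; simp at h; exact h.1
    have hSTcard : (S ∪ T).card ≤ l.length - 1 := by
      have hsub : S ∪ T ⊆ Finset.univ.filter (fun i : Fin l.length => 0 < i.val) := by
        intro i hi
        simp only [Finset.mem_filter, Finset.mem_univ, true_and]
        exact hST0 i hi
      refine le_trans (Finset.card_le_card hsub) ?_
      have : (Finset.univ.filter (fun i : Fin l.length => 0 < i.val)) ⊆
          Finset.univ.erase ⟨0, hpos⟩ := by
        intro i hi
        simp only [Finset.mem_filter, Finset.mem_univ, true_and] at hi
        refine Finset.mem_erase.mpr ⟨?_, Finset.mem_univ _⟩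
        intro h
        rw [h] at hi
        simp at hi
      refine le_trans (Finset.card_le_card this) ?_
      rw [Finset.card_erase_of_mem (Finset.mem_univ _)]
      simp
    have hinter : (S ∩ T).Nonempty := by
      rw [← Finset.card_pos]
      have h1 := Finset.card_union_add_card_inter S T
      have h2 : l.length ≤ S.card + T.card := by
        rw [hcardS, hcardT, hlen]
        omega
      omega
    obtain ⟨i, hiST⟩ := hinter
    have hiS := Finset.mem_inter.mp hiST |>.1
    have hiT := Finset.mem_inter.mp hiST |>.2
    rw [hS] at hiS; rw [hT] at hiT
    simp only [Finset.mem_filter, Finset.mem_univ, true_and] at hiS hiT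
    obtain ⟨hi0, hiT⟩ := hiT
    -- splice
    set Q : List V := l.take i.val with hQ
    set R : List V := l.drop i.val with hR
    have hQR : Q ++ R = l := List.take_append_drop i.val l
    have hQlen : Q.length = i.val := by
      rw [hQ, List.length_take]; omega
    have hRlen : R.length = l.length - i.val := by rw [hR, List.length_drop]
    have hQne : Q ≠ [] := by
      apply List.ne_nil_of_length_pos; omega
    have hRne : R ≠ [] := by
      apply List.ne_nil_of_length_pos
      have := i.isLt; omega
    have hQhead : Q.head hQne = u := by
      rw [List.head_eq_getElem]
      simp only [hQ, List.getElem_take]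
      exact hu0
    have hQlast : Q.getLast hQne = l.get ⟨i.val - 1, by omega⟩ := by
      rw [List.getLast_eq_getElem]
      simp only [hQ, List.getElem_take, List.length_take]
      congr 1
      omega
    have hRhead : R.head hRne = l.get i := by
      rw [List.head_eq_getElem]
      simp only [hR, List.getElem_drop]
      simp
    have hRlast : R.getLast hRne = v := by
      have h1 : l.getLast? = R.getLast? := by
        conv_lhs => rw [← hQR]
        exact List.getLast?_append_of_ne_nil Q hRne
      rw [List.getLast?_eq_getLast hne, List.getLast?_eq_getLast hRne] at h1
      rw [← Option.some_inj, ← h1]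
    have hchain2 : Chain' G.Adj (Q ++ R) := by rw [hQR]; exact hchain
    obtain ⟨hcQ, hcR, -⟩ := List.isChain_append.mp hchain2
    have hcRrev : Chain' G.Adj R.reverse := by
      rw [List.Chain', List.isChain_reverse]
      exact hcR.imp (fun a b h => h.symm)
    have big : Chain' G.Adj (Q ++ (R.reverse ++ [u])) := by
      rw [List.Chain', List.isChain_append]
      refine ⟨hcQ, ?_, ?_⟩
      · rw [List.isChain_append]
        refine ⟨hcRrev, List.isChain_singleton u, ?_⟩
        intro x hx y hy
        rw [List.getLast?_reverse, List.head?_eq_head hRne, Option.mem_some_iff] at hx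
        rw [List.head?_cons, Option.mem_some_iff] at hy
        subst hx; subst hy
        rw [hRhead]
        exact hiS.symm
      · intro x hx y hy
        rw [List.getLast?_eq_getLast hQne, Option.mem_some_iff] at hx
        rw [List.head?_append_of_ne_nil _ (by simp [hRne] : R.reverse ≠ []),
          List.head?_reverse, List.getLast?_eq_getLast hRne, Option.mem_some_iff] at hy
        subst hx; subst hy
        rw [hQlast, hRlast]
        exact hiT
    have hQcons : u :: Q.tail = Q := by
      rw [← hQhead]
      exact List.cons_head_tail hQne
    have hlisteq : u :: (Q.tail ++ R.reverse) = Q ++ R.reverse := by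
      rw [← hQcons]; simp
    have hperm : (u :: (Q.tail ++ R.reverse)).Perm l := by
      rw [hlisteq, ← hQR]
      exact (List.reverse_perm R).append_left Q
    refine ⟨u, Q.tail ++ R.reverse, ?_, ?_, ?_⟩
    · have big2 : Chain' G.Adj (u :: (Q.tail ++ (R.reverse ++ [u]))) := by
        rw [← List.cons_append, hQcons]
        exact big
      rw [show Q.tail ++ R.reverse ++ [u] = Q.tail ++ (R.reverse ++ [u]) from List.append_assoc ..]
      exact big2
    · exact hperm.symm.nodup hnd
    · intro w
      exact (hperm.symm.mem_iff).mp (hmem w)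


lemma edge_adj_cases {H : SimpleGraph V} {u v x y : V}
    (h : (H ⊔ fromEdgeSet {s(u,v)}).Adj x y) :
    H.Adj x y ∨ (x = u ∧ y = v) ∨ (x = v ∧ y = u) := by
  rcases h with h | h
  · exact Or.inl h
  · rw [fromEdgeSet_adj] at h
    obtain ⟨h1, -⟩ := h
    simp only [Set.mem_singleton_iff, Sym2.eq_iff] at h1
    tauto

lemma chain'_transfer {H : SimpleGraph V} {u v : V} :
    ∀ (m : List V), Chain' (H ⊔ fromEdgeSet {s(u,v)}).Adj m → u ∉ m → Chain' H.Adj m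
  | [], _, _ => List.isChain_nil
  | [_], _, _ => List.isChain_singleton _
  | x :: y :: t, hc, hu => by
    rw [List.Chain', List.isChain_cons_cons] at hc ⊢
    refine ⟨?_, chain'_transfer (y :: t) hc.2 (fun h => hu (List.mem_cons_of_mem _ h))⟩
    rcases edge_adj_cases hc.1 with h | ⟨rfl, rfl⟩ | ⟨rfl, rfl⟩
    · exact h
    · exact absurd (List.mem_cons_self) hu
    · exact absurd (List.mem_cons_of_mem _ (List.mem_cons_self)) hu

lemma exists_nonadj [Fintype V] [DecidableEq V] (hcard : 3 ≤ Fintype.card V)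
    (hnot : ¬G.IsHamiltonian) : ∃ u v : V, u ≠ v ∧ ¬G.Adj u v := by
  by_contra hcon
  push_neg at hcon
  apply hnot
  obtain ⟨a, m, hnd, hmem, hlen⟩ :
      ∃ (a : V) (m : List V), (a :: m).Nodup ∧ (∀ w : V, w ∈ a :: m) ∧
        (a :: m).length = Fintype.card V := by
    cases hl' : (Finset.univ.toList : List V) with
    | nil =>
      exfalso
      have : (Finset.univ.toList : List V).length = Fintype.card V := by simp
      rw [hl'] at this; simp at this; omega
    | cons a m =>
      refine ⟨a, m, ?_, ?_, ?_⟩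
      · rw [← hl']; exact Finset.nodup_toList _
      · intro w; rw [← hl']; simp
      · rw [← hl']; simp
  have hmne : m ≠ [] := by
    intro h; rw [h] at hlen; simp at hlen; omega
  have hchain : Chain (fun x y : V => x ≠ y) a m := List.Pairwise.isChain hnd
  have hclose : (a :: m).getLast (List.cons_ne_nil a m) ≠ a := by
    rw [List.getLast_cons hmne]
    intro h
    have : a ∈ m := h ▸ List.getLast_mem hmne
    simp at hnd; tauto
  have hchain2 : Chain (fun x y : V => x ≠ y) a (m ++ [a]) :=
    chain_concat m hchain hclose
  have hcyc : CycList G a m :=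
    ⟨List.IsChain.imp (fun ⦃x y⦄ hxy => hcon x y hxy) hchain2, hnd, hmem⟩
  exact hcyc.isHamiltonian hcard

theorem ore_hamiltonian [Fintype V] [DecidableEq V] (hcard : 3 ≤ Fintype.card V)
    {G : SimpleGraph V} [DecidableRel G.Adj]
    (hore : ∀ x y : V, x ≠ y → ¬G.Adj x y → Fintype.card V ≤ G.degree x + G.degree y) :
    G.IsHamiltonian := by
  by_contra hG
  have hfin : ({H : SimpleGraph V | G ≤ H ∧ ¬H.IsHamiltonian}).Finite := Set.toFinite _
  obtain ⟨H, ⟨hGH, hHnot⟩, hmax⟩ : ∃ H ∈ {H : SimpleGraph V | G ≤ H ∧ ¬H.IsHamiltonian},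
      ∀ H' ∈ {H : SimpleGraph V | G ≤ H ∧ ¬H.IsHamiltonian}, id H ≤ id H' → id H = id H' := by
    obtain ⟨H, hH, hm⟩ := hfin.exists_maximal ⟨G, le_refl G, hG⟩
    exact ⟨H, hH, fun H' hH' hle => le_antisymm hle (hm hH' hle)⟩
  simp only [id] at hmax
  letI : DecidableRel H.Adj := Classical.decRel _
  have horeH : ∀ x y : V, x ≠ y → ¬H.Adj x y →
      Fintype.card V ≤ H.degree x + H.degree y := by
    intro x y hxy hnadj
    have hnadjG : ¬G.Adj x y := fun h => hnadj (hGH h)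
    refine le_trans (hore x y hxy hnadjG) (Nat.add_le_add ?_ ?_) <;>
    · rw [← card_neighborFinset_eq_degree, ← card_neighborFinset_eq_degree]
      apply Finset.card_le_card
      intro w hw
      rw [mem_neighborFinset] at hw ⊢
      exact hGH hw
  obtain ⟨u, v, huv, hnadj⟩ := exists_nonadj hcard hHnot
  letI : DecidableRel (H ⊔ fromEdgeSet {s(u,v)}).Adj := Classical.decRel _
  have hadj' : (H ⊔ fromEdgeSet {s(u,v)}).Adj u v := by
    simp [sup_adj, fromEdgeSet_adj, huv]
  have hlt : H < H ⊔ fromEdgeSet {s(u,v)} :=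
    lt_of_le_of_ne le_sup_left (fun h => hnadj (by rw [h]; exact hadj'))
  have hH'ham : (H ⊔ fromEdgeSet {s(u,v)}).IsHamiltonian := by
    by_contra hH'
    exact (ne_of_lt hlt) (hmax _ ⟨le_trans hGH le_sup_left, hH'⟩ le_sup_left)
  obtain ⟨a, p, hp⟩ := hH'ham (by omega)
  have hp2 := IsHamiltonianCycle.rotate hp (hp.mem_support u)
  obtain ⟨l, hchain, hnd, hmem⟩ := hamCycle_to_cycList hp2
  have hlen : (u :: l).length = Fintype.card V := by
    have : (u :: l).toFinset = Finset.univ := by ext x; simpa using hmem x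
    rw [← List.toFinset_card_of_nodup hnd, this, Finset.card_univ]
  obtain ⟨w1, rest, rfl⟩ : ∃ w1 rest, l = w1 :: rest := by
    cases l with
    | nil => exfalso; simp at hlen; omega
    | cons w1 rest => exact ⟨w1, rest, rfl⟩
  have hrestne : rest ≠ [] := by
    intro h; rw [h] at hlen; simp at hlen; omega
  rw [List.cons_append, List.Chain, List.chain_cons] at hchain
  obtain ⟨h1, hch2⟩ := hchain
  have hch2' : Chain' (H ⊔ fromEdgeSet {s(u,v)}).Adj ((w1 :: rest) ++ [u]) := by
    rw [List.cons_append]; exact hch2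
  obtain ⟨hcl, -, hlink⟩ := List.isChain_append.mp hch2'
  have hz : (H ⊔ fromEdgeSet {s(u,v)}).Adj ((w1 :: rest).getLast (List.cons_ne_nil _ _)) u := by
    refine hlink _ ?_ u rfl
    rw [List.getLast?_eq_getLast (List.cons_ne_nil _ _)]
    rfl
  have hzmem : (w1 :: rest).getLast (List.cons_ne_nil _ _) ∈ w1 :: rest := List.getLast_mem _
  have humem : u ∉ w1 :: rest := (List.nodup_cons.mp hnd).1
  have hzne_u : (w1 :: rest).getLast (List.cons_ne_nil _ _) ≠ u := fun h => humem (h ▸ hzmem)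
  have hHcl : Chain' H.Adj (w1 :: rest) := chain'_transfer _ hcl humem
  have hcontra : ∀ P : List V, Chain' H.Adj P → P.Nodup → (∀ w : V, w ∈ P) → False := by
    intro P hc1 hc2 hc3
    obtain ⟨a', c', hc'⟩ := pathList_cycList hcard horeH P hc1 hc2 hc3
    exact hHnot (hc'.isHamiltonian hcard)
  by_cases hw1v : w1 = v
  · -- edge u-v is the first edge of the cycle; reverse-path avoids it
    have hzv : (w1 :: rest).getLast (List.cons_ne_nil _ _) ≠ v := by
      rw [List.getLast_cons hrestne]
      intro h
      have : w1 ∈ rest := by rw [hw1v, ← h]; exact List.getLast_mem hrestne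
      have := (List.nodup_cons.mp ((List.nodup_cons.mp hnd).2)).1
      exact this ‹w1 ∈ rest›
    have hHz : H.Adj ((w1 :: rest).getLast (List.cons_ne_nil _ _)) u := by
      rcases edge_adj_cases hz with h | ⟨h, -⟩ | ⟨h, -⟩
      · exact h
      · exact absurd h hzne_u
      · exact absurd h hzv
    have hPchain : Chain' H.Adj ((w1 :: rest) ++ [u]) := by
      rw [List.Chain', List.isChain_append]
      refine ⟨hHcl, List.isChain_singleton _, ?_⟩
      intro x hx y hy
      rw [List.getLast?_eq_getLast (List.cons_ne_nil _ _), Option.mem_some_iff] at hx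
      rw [List.head?_cons, Option.mem_some_iff] at hy
      subst hx; subst hy
      exact hHz
    have hrev : Chain' H.Adj (((w1 :: rest) ++ [u]).reverse) :=
      List.isChain_reverse.mpr (hPchain.imp (fun a b hab => hab.symm))
    have hperm : (((w1 :: rest) ++ [u]).reverse).Perm (u :: w1 :: rest) :=
      (List.reverse_perm _).trans (List.perm_append_singleton _ _)
    exact hcontra _ hrev (hperm.symm.nodup hnd) (fun w => hperm.mem_iff.mpr (hmem w))
  · have hHuw1 : H.Adj u w1 := by
      rcases edge_adj_cases h1 with h | ⟨-, h⟩ | ⟨-, h⟩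
      · exact h
      · exact absurd h hw1v
      · exact absurd (h ▸ List.mem_cons_self (a := w1) (l := rest)) humem
    by_cases hzv : (w1 :: rest).getLast (List.cons_ne_nil _ _) = v
    · -- edge u-v is the last edge of the cycle; the path itself avoids it
      have : Chain' H.Adj (u :: w1 :: rest) := List.isChain_cons_cons.mpr ⟨hHuw1, hHcl⟩
      exact hcontra _ this hnd hmem
    · -- the cycle avoids the edge u-v entirely
      have hHz : H.Adj ((w1 :: rest).getLast (List.cons_ne_nil _ _)) u := by
        rcases edge_adj_cases hz with h | ⟨h, -⟩ | ⟨h, -⟩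
        · exact h
        · exact absurd h hzne_u
        · exact absurd h hzv
      have hc3 : Chain' H.Adj ((w1 :: rest) ++ [u]) := by
        rw [List.Chain', List.isChain_append]
        refine ⟨hHcl, List.isChain_singleton _, ?_⟩
        intro x hx y hy
        rw [List.getLast?_eq_getLast (List.cons_ne_nil _ _), Option.mem_some_iff] at hx
        rw [List.head?_cons, Option.mem_some_iff] at hy
        subst hx; subst hy
        exact hHz
      have hchainH : Chain H.Adj u ((w1 :: rest) ++ [u]) := by
        rw [List.cons_append, List.Chain, List.chain_cons]
        refine ⟨hHuw1, ?_⟩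
        rw [List.cons_append] at hc3
        exact hc3
      exact hHnot (CycList.isHamiltonian hcard (⟨hchainH, hnd, hmem⟩ : CycList H u (w1 :: rest)))

lemma ore_condition {n : ℕ} (G : SimpleGraph (Fin n)) [DecidableRel G.Adj]
    (hn : 3 ≤ n) (h : (n - 1).choose 2 + 1 < G.edgeFinset.card) :
    ∀ x y : Fin n, x ≠ y → ¬G.Adj x y → n ≤ G.degree x + G.degree y := by
  intro x y hxy hnadj
  have eq1 : G.edgeFinset.card + Gᶜ.edgeFinset.card = n.choose 2 := by
    have hdisj : Disjoint G.edgeFinset Gᶜ.edgeFinset := by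
      rw [Finset.disjoint_left]
      intro e he1 he2
      induction e with
      | h a b =>
        rw [mem_edgeFinset, mem_edgeSet] at he1 he2
        exact he2.2 he1
    calc G.edgeFinset.card + Gᶜ.edgeFinset.card
        = (G.edgeFinset ∪ Gᶜ.edgeFinset).card := (Finset.card_union_of_disjoint hdisj).symm
      _ = (G ⊔ Gᶜ).edgeFinset.card := by rw [edgeFinset_sup]
      _ = (⊤ : SimpleGraph (Fin n)).edgeFinset.card := by
          congr 1
          ext e
          rw [mem_edgeFinset, mem_edgeFinset, sup_compl_eq_top]
      _ = n.choose 2 := by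
          rw [card_edgeFinset_top_eq_card_choose_two, Fintype.card_fin]
  have eq2 : Gᶜ.degree x + Gᶜ.degree y ≤ Gᶜ.edgeFinset.card + 1 := by
    have hsub : Gᶜ.incidenceFinset x ∪ Gᶜ.incidenceFinset y ⊆ Gᶜ.edgeFinset := by
      intro e he
      rcases Finset.mem_union.mp he with he | he <;>
      · rw [mem_incidenceFinset] at he
        rw [mem_edgeFinset]
        exact Gᶜ.incidenceSet_subset _ he
    have hint : Gᶜ.incidenceFinset x ∩ Gᶜ.incidenceFinset y ⊆ {s(x,y)} := by
      intro e he
      rw [Finset.mem_inter, mem_incidenceFinset, mem_incidenceFinset] at he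
      obtain ⟨⟨-, hx⟩, ⟨-, hy⟩⟩ := he
      rw [Finset.mem_singleton]
      exact (Sym2.mem_and_mem_iff hxy).mp ⟨hx, hy⟩
    calc Gᶜ.degree x + Gᶜ.degree y
        = (Gᶜ.incidenceFinset x).card + (Gᶜ.incidenceFinset y).card := by
          rw [card_incidenceFinset_eq_degree, card_incidenceFinset_eq_degree]
      _ = (Gᶜ.incidenceFinset x ∪ Gᶜ.incidenceFinset y).card
            + (Gᶜ.incidenceFinset x ∩ Gᶜ.incidenceFinset y).card :=
          (Finset.card_union_add_card_inter _ _).symm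
      _ ≤ Gᶜ.edgeFinset.card + 1 := by
          refine Nat.add_le_add (Finset.card_le_card hsub) ?_
          refine le_trans (Finset.card_le_card hint) ?_
          simp
  have eq3 : Gᶜ.degree x = n - 1 - G.degree x := by
    rw [G.degree_compl, Fintype.card_fin]
  have eq3' : Gᶜ.degree y = n - 1 - G.degree y := by
    rw [G.degree_compl, Fintype.card_fin]
  have eq4 : G.degree x < n := by
    have := G.degree_lt_card_verts x
    rwa [Fintype.card_fin] at this
  have eq4' : G.degree y < n := by
    have := G.degree_lt_card_verts y
    rwa [Fintype.card_fin] at this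
  have eq5 : n.choose 2 = (n - 1).choose 2 + (n - 1) := by
    obtain ⟨m, rfl⟩ : ∃ m, n = m + 1 := ⟨n - 1, by omega⟩
    rw [Nat.choose_succ_succ, Nat.choose_one_right]
    simp [Nat.add_comm]
  omega

end OreAux

/-- Ore's size condition: a graph on `n` vertices with more than
`(n-1 choose 2) + 1` edges is Hamiltonian. -/
theorem ore_size_hamiltonian {n : ℕ} (G : SimpleGraph (Fin n))
    (h : (n - 1).choose 2 + 1 < G.edgeSet.ncard) :
    G.IsHamiltonian := by
  letI : DecidableRel G.Adj := Classical.decRel _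
  have hcard : G.edgeSet.ncard = G.edgeFinset.card := by
    rw [← coe_edgeFinset, Set.ncard_coe_finset]
  rw [hcard] at h
  have hn3 : 3 ≤ n := by
    have hle := G.card_edgeFinset_le_card_choose_two
    rw [Fintype.card_fin] at hle
    by_contra hlt
    push_neg at hlt
    interval_cases n <;>
      simp only [show (0:ℕ)-1 = 0 from rfl, show (1:ℕ)-1 = 0 from rfl,
        show (2:ℕ)-1 = 1 from rfl, show Nat.choose 0 2 = 0 from rfl,
        show Nat.choose 1 2 = 0 from rfl, show Nat.choose 2 2 = 1 from rfl] at hle h <;>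
      omega
  have hore := ore_condition G hn3 h
  refine ore_hamiltonian (by rw [Fintype.card_fin]; exact hn3) ?_
  intro a b hab hnadj
  rw [Fintype.card_fin]
  exact hore a b hab hnadj
end

section
/- For every simple graph G, the number of edges e(G) satisfies e(G) ≥ ρ(G)(ρ(G)+1)/2, where ρ(G) is the spectral radius of the adjacency matrix of G. Equivalently, ρ(G) ≤ (−1 + √(1 + 8e(G)))/2. -/
open SimpleGraph

open Matrix Finset in
lemma rayleigh_le {n : Type*} [Fintype n] [DecidableEq n] {A : Matrix n n ℝ}
    (hA : A.IsHermitian) {t : ℝ} (ht : ∀ i, hA.eigenvalues i ≤ t) (w : n → ℝ) :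
    w ⬝ᵥ (A *ᵥ w) ≤ t * (w ⬝ᵥ w) := by
  set U : Matrix n n ℝ := (hA.eigenvectorUnitary : Matrix n n ℝ) with hUdef
  have hUmem : U ∈ Matrix.unitaryGroup n ℝ := SetLike.coe_mem _
  have hUU : U * star U = 1 := (Matrix.mem_unitaryGroup_iff).mp hUmem
  have hUT : Uᵀ = star U := by
    rw [Matrix.star_eq_conjTranspose]
    ext i j
    simp [Matrix.conjTranspose_apply]
  set c : n → ℝ := Uᵀ *ᵥ w with hcdef
  have hspec : A = U * Matrix.diagonal hA.eigenvalues * star U := by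
    have := hA.spectral_theorem
    rw [Matrix.star_eq_conjTranspose]
    simpa [RCLike.ofReal_real_eq_id, Matrix.star_eq_conjTranspose] using this
  have hQ : w ⬝ᵥ (A *ᵥ w) = ∑ i, hA.eigenvalues i * c i ^ 2 := by
    have step : w ⬝ᵥ (A *ᵥ w) = w ⬝ᵥ ((U * Matrix.diagonal hA.eigenvalues * star U) *ᵥ w) := by
      rw [← hspec]
    rw [step, ← hUT]
    rw [← Matrix.mulVec_mulVec, ← Matrix.mulVec_mulVec, Matrix.dotProduct_mulVec (v := w),
      ← Matrix.mulVec_transpose]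
    simp only [← hcdef, Matrix.mulVec_diagonal]
    simp [dotProduct, Matrix.mulVec_diagonal]
    exact Finset.sum_congr rfl fun i _ => by ring
  have hcc : c ⬝ᵥ c = w ⬝ᵥ w := by
    rw [hcdef, Matrix.dotProduct_mulVec (v := Uᵀ *ᵥ w), Matrix.vecMul_transpose,
      Matrix.mulVec_mulVec, hUT, hUU, Matrix.one_mulVec]
  calc w ⬝ᵥ (A *ᵥ w) = ∑ i, hA.eigenvalues i * c i ^ 2 := hQ
    _ ≤ ∑ i, t * c i ^ 2 :=
        Finset.sum_le_sum fun i _ => mul_le_mul_of_nonneg_right (ht i) (sq_nonneg _)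
    _ = t * (c ⬝ᵥ c) := by rw [← Finset.mul_sum]; simp [dotProduct, sq]
    _ = t * (w ⬝ᵥ w) := by rw [hcc]

open Matrix Finset in
lemma stanley_key {V : Type*} [Fintype V] [DecidableEq V] (G : SimpleGraph V) :
    specRad G * (specRad G + 1) ≤ 2 * (G.edgeSet.ncard : ℝ) ∧ 0 ≤ specRad G := by
  classical
  set m : ℝ := (G.edgeSet.ncard : ℝ) with hmdef
  have hm0 : (0:ℝ) ≤ m := by positivity
  by_cases hV : Nonempty V
  case neg =>
    have : IsEmpty V := not_nonempty_iff.mp hV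
    have hρ : specRad G = 0 := Real.iSup_of_isEmpty _
    rw [hρ]
    constructor <;> simp <;> linarith
  case pos =>
  set A : Matrix V V ℝ := adjMat G with hAdef
  have hA : A.IsHermitian := adjMat_isHermitian G
  -- basic facts about A
  have hAapp : ∀ u v, A u v = if G.Adj u v then 1 else 0 := by
    intro u v
    by_cases h : G.Adj u v <;> simp [hAdef, adjMat, SimpleGraph.adjMatrix, h]
  have hApos : ∀ u v, 0 ≤ A u v := by
    intro u v; rw [hAapp]; split <;> norm_num
  have hAle1 : ∀ u v, A u v ≤ 1 := by
    intro u v; rw [hAapp]; split <;> norm_num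
  have hAdiag : ∀ v, A v v = 0 := by
    intro v; rw [hAapp]; simp
  have hAsymm : ∀ u v, A u v = A v u := by
    intro u v; rw [hAapp, hAapp]; simp [G.adj_comm u v]
  have hArow : ∀ u, ∑ v, A u v = (G.degree u : ℝ) := by
    intro u
    simp only [hAapp]
    rw [Finset.sum_boole]
    congr 1
    have : Finset.univ.filter (fun v => G.Adj u v) = G.neighborFinset u := by
      ext v; simp
    rw [this]
    rfl
  have hcol : ∀ v, ∑ u, A u v = (G.degree v : ℝ) := by
    intro v
    rw [← hArow v]
    exact Finset.sum_congr rfl fun u _ => hAsymm u v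
  have hdsum : ∑ v, (G.degree v : ℝ) = 2 * m := by
    have h1 : ∑ v, G.degree v = 2 * G.edgeFinset.card := G.sum_degrees_eq_twice_card_edges
    have h2 : G.edgeSet.ncard = G.edgeFinset.card := by
      rw [Set.ncard_eq_toFinset_card' G.edgeSet]
      congr 1
    rw [hmdef, h2]
    exact_mod_cast h1
  -- eigen data
  obtain ⟨i0, hi0⟩ := Finite.exists_max hA.eigenvalues
  have hρ : specRad G = hA.eigenvalues i0 :=
    le_antisymm (ciSup_le hi0) (le_ciSup (Finite.bddAbove_range _) i0)
  have ht : ∀ i, hA.eigenvalues i ≤ specRad G := fun i => hρ ▸ hi0 i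
  set x : V → ℝ := ⇑(hA.eigenvectorBasis i0) with hxdef
  have hAx : A *ᵥ x = specRad G • x := by
    rw [hρ]; exact hA.mulVec_eigenvectorBasis i0
  have hx2 : ∑ v, x v ^ 2 = 1 := by
    have hn : ‖(hA.eigenvectorBasis i0 : EuclideanSpace ℝ V)‖ = 1 :=
      hA.eigenvectorBasis.orthonormal.1 i0
    have h := congrArg (fun r : ℝ => r ^ 2) hn
    simp only [EuclideanSpace.norm_eq] at h
    rw [Real.sq_sqrt (by positivity)] at h
    simpa [Real.norm_eq_abs, sq_abs] using h
  set y : V → ℝ := fun v => |x v| with hydef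
  have hy0 : ∀ v, 0 ≤ y v := fun v => abs_nonneg _
  have hy2 : ∑ v, y v ^ 2 = 1 := by simpa [hydef, sq_abs] using hx2
  -- ρ = yᵀ A y
  have hQx : x ⬝ᵥ (A *ᵥ x) = specRad G := by
    rw [hAx]
    rw [dotProduct_smul]
    have : x ⬝ᵥ x = 1 := by
      simpa [dotProduct, sq] using hx2
    rw [this]
    simp
  have hQy_le : y ⬝ᵥ (A *ᵥ y) ≤ specRad G := by
    have := rayleigh_le hA ht y
    have hyy : y ⬝ᵥ y = 1 := by simpa [dotProduct, sq] using hy2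
    rw [hyy, mul_one] at this
    exact this
  have hQy_ge : specRad G ≤ y ⬝ᵥ (A *ᵥ y) := by
    rw [← hQx]
    simp only [dotProduct, Matrix.mulVec, Finset.mul_sum]
    refine Finset.sum_le_sum fun u _ => Finset.sum_le_sum fun v _ => ?_
    have h1 : x u * x v ≤ y u * y v := by
      calc x u * x v ≤ |x u * x v| := le_abs_self _
        _ = y u * y v := by rw [abs_mul]
    calc x u * (A u v * x v) = A u v * (x u * x v) := by ring
      _ ≤ A u v * (y u * y v) := mul_le_mul_of_nonneg_left h1 (hApos u v)
      _ = y u * (A u v * y v) := by ring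
  have hQy : y ⬝ᵥ (A *ᵥ y) = specRad G := le_antisymm hQy_le hQy_ge
  -- ρ ≥ 0
  have hρ0 : 0 ≤ specRad G := by
    obtain ⟨v0⟩ := hV
    have hw := rayleigh_le hA ht (Pi.single v0 1)
    rw [Matrix.mulVec_single] at hw
    have h1 : Pi.single v0 (1:ℝ) ⬝ᵥ (MulOpposite.op (1:ℝ) • A.col v0) = 0 := by
      rw [single_dotProduct]
      simp [hAdiag]
    have h2 : Pi.single v0 (1:ℝ) ⬝ᵥ Pi.single v0 1 = 1 := by
      rw [single_dotProduct]
      simp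
    rw [h1, h2, mul_one] at hw
    exact hw
  refine ⟨?_, hρ0⟩
  -- step 1 : ρ ≤ ∑ d v y v ^ 2
  have hhalf : ∑ u, ∑ v, (A u v * y u ^ 2 / 2 + A u v * y v ^ 2 / 2)
      = ∑ v, (G.degree v : ℝ) * y v ^ 2 := by
    simp only [Finset.sum_add_distrib]
    have e1 : ∑ u, ∑ v, A u v * y u ^ 2 / 2 = ∑ u, (G.degree u : ℝ) * y u ^ 2 / 2 := by
      refine Finset.sum_congr rfl fun u _ => ?_
      rw [← Finset.sum_div, ← Finset.sum_mul, hArow u]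
    have e2 : ∑ u, ∑ v, A u v * y v ^ 2 / 2 = ∑ v, (G.degree v : ℝ) * y v ^ 2 / 2 := by
      rw [Finset.sum_comm]
      refine Finset.sum_congr rfl fun v _ => ?_
      rw [← Finset.sum_div, ← Finset.sum_mul, hcol v]
    rw [e1, e2, ← Finset.sum_add_distrib]
    exact Finset.sum_congr rfl fun v _ => by ring
  have S1 : specRad G ≤ ∑ v, (G.degree v : ℝ) * y v ^ 2 := by
    rw [← hQy, ← hhalf]
    simp only [dotProduct, Matrix.mulVec, Finset.mul_sum]
    refine Finset.sum_le_sum fun u _ => Finset.sum_le_sum fun v _ => ?_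
    have h1 : y u * y v ≤ (y u ^ 2 + y v ^ 2) / 2 := by nlinarith [sq_nonneg (y u - y v)]
    have h2 := mul_le_mul_of_nonneg_left h1 (hApos u v)
    nlinarith [h2]
  -- step 2 : ρ^2 ≤ 2m - ∑ d v y v^2
  set z : V → ℝ := fun u => ∑ v, A u v * y v with hzdef
  have hcs1 : specRad G ^ 2 ≤ ∑ u, z u ^ 2 := by
    have hyz : ∑ u, y u * z u = specRad G := by
      rw [← hQy]
      simp [dotProduct, Matrix.mulVec, hzdef]
    have := Finset.sum_mul_sq_le_sq_mul_sq Finset.univ y z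
    rw [hyz, hy2, one_mul] at this
    exact this
  have hcs2 : ∀ u, z u ^ 2 ≤ (G.degree u : ℝ) * ∑ v, A u v * y v ^ 2 := by
    intro u
    have key := Finset.sum_mul_sq_le_sq_mul_sq Finset.univ
      (fun v => Real.sqrt (A u v)) (fun v => Real.sqrt (A u v) * y v)
    have e1 : ∑ v, Real.sqrt (A u v) * (Real.sqrt (A u v) * y v) = z u := by
      refine Finset.sum_congr rfl fun v _ => ?_
      rw [← mul_assoc, Real.mul_self_sqrt (hApos u v)]
    have e2 : ∑ v, Real.sqrt (A u v) ^ 2 = (G.degree u : ℝ) := by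
      rw [← hArow u]
      exact Finset.sum_congr rfl fun v _ => Real.sq_sqrt (hApos u v)
    have e3 : ∑ v, (Real.sqrt (A u v) * y v) ^ 2 = ∑ v, A u v * y v ^ 2 := by
      refine Finset.sum_congr rfl fun v _ => ?_
      rw [mul_pow, Real.sq_sqrt (hApos u v)]
    rw [e1, e2, e3] at key
    exact key
  have hone : ∀ v, ∑ u, A u v * (G.degree u : ℝ) ≤ 2 * m - (G.degree v : ℝ) := by
    intro v
    have h1 : ∑ u, A u v * (G.degree u : ℝ)
        = ∑ u ∈ Finset.univ.erase v, A u v * (G.degree u : ℝ) := by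
      rw [← Finset.add_sum_erase _ _ (Finset.mem_univ v), hAdiag v, zero_mul, zero_add]
    have h2 : ∑ u ∈ Finset.univ.erase v, A u v * (G.degree u : ℝ)
        ≤ ∑ u ∈ Finset.univ.erase v, (G.degree u : ℝ) := by
      refine Finset.sum_le_sum fun u _ => ?_
      calc A u v * (G.degree u : ℝ) ≤ 1 * (G.degree u : ℝ) :=
            mul_le_mul_of_nonneg_right (hAle1 u v) (by positivity)
        _ = (G.degree u : ℝ) := one_mul _
    have h3 : ∑ u ∈ Finset.univ.erase v, (G.degree u : ℝ)
        = 2 * m - (G.degree v : ℝ) := by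
      have := Finset.add_sum_erase Finset.univ (fun u => (G.degree u : ℝ)) (Finset.mem_univ v)
      rw [hdsum] at this
      linarith
    rw [h1]; linarith
  have S2 : specRad G ^ 2 ≤ 2 * m - ∑ v, (G.degree v : ℝ) * y v ^ 2 := by
    have hswap : ∑ u, (G.degree u : ℝ) * ∑ v, A u v * y v ^ 2
        = ∑ v, y v ^ 2 * ∑ u, A u v * (G.degree u : ℝ) := by
      simp only [Finset.mul_sum]
      rw [Finset.sum_comm]
      exact Finset.sum_congr rfl fun v _ => Finset.sum_congr rfl fun u _ => by ring
    have hb1 : ∑ u, z u ^ 2 ≤ ∑ u, (G.degree u : ℝ) * ∑ v, A u v * y v ^ 2 :=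
      Finset.sum_le_sum fun u _ => hcs2 u
    have hb2 : ∑ v, y v ^ 2 * ∑ u, A u v * (G.degree u : ℝ)
        ≤ ∑ v, y v ^ 2 * (2 * m - (G.degree v : ℝ)) :=
      Finset.sum_le_sum fun v _ => mul_le_mul_of_nonneg_left (hone v) (sq_nonneg _)
    have hb3 : ∑ v, y v ^ 2 * (2 * m - (G.degree v : ℝ))
        = 2 * m - ∑ v, (G.degree v : ℝ) * y v ^ 2 := by
      have : ∑ v, y v ^ 2 * (2 * m - (G.degree v : ℝ))
          = 2 * m * ∑ v, y v ^ 2 - ∑ v, (G.degree v : ℝ) * y v ^ 2 := by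
        rw [Finset.mul_sum, ← Finset.sum_sub_distrib]
        exact Finset.sum_congr rfl fun v _ => by ring
      rw [this, hy2, mul_one]
    calc specRad G ^ 2 ≤ ∑ u, z u ^ 2 := hcs1
      _ ≤ ∑ u, (G.degree u : ℝ) * ∑ v, A u v * y v ^ 2 := hb1
      _ = ∑ v, y v ^ 2 * ∑ u, A u v * (G.degree u : ℝ) := hswap
      _ ≤ ∑ v, y v ^ 2 * (2 * m - (G.degree v : ℝ)) := hb2
      _ = 2 * m - ∑ v, (G.degree v : ℝ) * y v ^ 2 := hb3
  nlinarith [S1, S2]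


/-- Stanley's inequality: `e(G) ≥ ρ(G)(ρ(G)+1)/2`, equivalently
`ρ(G) ≤ (-1 + √(1 + 8 e(G)))/2`. -/
theorem stanley_inequality {V : Type*} [Fintype V] [DecidableEq V] (G : SimpleGraph V) :
    specRad G * (specRad G + 1) / 2 ≤ (G.edgeSet.ncard : ℝ) ∧
    specRad G ≤ (-1 + Real.sqrt (1 + 8 * (G.edgeSet.ncard : ℝ))) / 2 := by
  obtain ⟨hkey, hρ0⟩ := stanley_key G
  set m : ℝ := (G.edgeSet.ncard : ℝ)
  constructor
  · linarith
  · have h1 : (2 * specRad G + 1) ^ 2 ≤ 1 + 8 * m := by nlinarith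
    have h2 : 2 * specRad G + 1 ≤ Real.sqrt (1 + 8 * m) := by
      calc 2 * specRad G + 1 = Real.sqrt ((2 * specRad G + 1) ^ 2) :=
            (Real.sqrt_sq (by linarith)).symm
        _ ≤ Real.sqrt (1 + 8 * m) := Real.sqrt_le_sqrt h1
    linarith
end

section
/- Let n ≥ 4 and let 𝒢 = {G_1, ..., G_n} be a family of graphs on the common vertex set {1,...,n}, with e(G_i) > (n-1 choose 2) + 1 for every i. Then 𝒢 admits a rainbow Hamiltonian cycle. -/
open SimpleGraph

namespace RainbowHC

open Finset SimpleGraph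
open Fin.NatCast Fin.CommRing

variable {n : ℕ}


section casts
variable [NeZero n]

lemma val_cast_lt (k : ℕ) (h : k < n) : ((k : Fin n) : ℕ) = k := by
  rw [Fin.val_natCast]; exact Nat.mod_eq_of_lt h

lemma cast_add_n (k : ℕ) : ((k + n : ℕ) : Fin n) = (k : Fin n) := by
  push_cast [Fin.natCast_self]; ring

lemma cast_inj_lt {k l : ℕ} (hk : k < n) (hl : l < n) (h : (k : Fin n) = (l : Fin n)) :
    k = l := by
  have := congrArg Fin.val h
  rwa [val_cast_lt k hk, val_cast_lt l hl] at this

lemma cast_succ_ne (hn : 2 ≤ n) (k : ℕ) : ((k : ℕ) : Fin n) ≠ ((k + 1 : ℕ) : Fin n) := by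
  intro h
  have hv := congrArg Fin.val h
  rw [Fin.val_natCast, Fin.val_natCast] at hv
  have h1 : 1 % n = 1 := Nat.mod_eq_of_lt (by omega)
  have hmod : (k+1) % n = (k % n + 1) % n := by
    conv_lhs => rw [Nat.add_mod, h1]
  have hk := Nat.mod_lt k (show 0 < n by omega)
  rcases Nat.lt_or_ge (k % n + 1) n with hlt | hge
  · rw [Nat.mod_eq_of_lt hlt] at hmod; omega
  · have hkn : k % n = n - 1 := by omega
    have h0 : (k % n + 1) % n = 0 := by
      rw [hkn, Nat.sub_add_cancel (by omega), Nat.mod_self]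
    omega

end casts

/-- the cyclic weight of an ordering of `Fin n` -/
def cycWeight [NeZero n] (m : Fin n → Fin n → ℕ) (π : Equiv.Perm (Fin n)) : ℕ :=
  ∑ k ∈ Finset.range n, m (π (k : Fin n)) (π ((k+1 : ℕ) : Fin n))

def moveTwo {α : Type*} [DecidableEq α] (x y x' y' : α) : Equiv.Perm α :=
  (Equiv.swap x x').trans (Equiv.swap ((Equiv.swap x x') y) y')

lemma moveTwo_fst {α : Type*} [DecidableEq α] {x y x' y' : α} (hxy : x ≠ y) (hxy' : x' ≠ y') :
    moveTwo x y x' y' x = x' := by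
  simp only [moveTwo, Equiv.trans_apply, Equiv.swap_apply_left]
  apply Equiv.swap_apply_of_ne_of_ne
  · intro h
    have h2 : Equiv.swap x x' x' = Equiv.swap x x' ((Equiv.swap x x') y) :=
      congrArg _ h
    rw [Equiv.swap_apply_right, Equiv.swap_apply_self] at h2
    exact hxy h2
  · exact hxy'

lemma moveTwo_snd {α : Type*} [DecidableEq α] (x y x' y' : α) :
    moveTwo x y x' y' y = y' := by
  simp only [moveTwo, Equiv.trans_apply, Equiv.swap_apply_left]

/-- fibers over different target pairs have the same cardinality -/
lemma fiber_card_eq_target [DecidableEq (Equiv.Perm (Fin n))] (a b : Fin n) (hab : a ≠ b)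
    (p q : Fin n × Fin n) (hp : p.1 ≠ p.2) (hq : q.1 ≠ q.2) :
    #(univ.filter fun π : Equiv.Perm (Fin n) => π a = p.1 ∧ π b = p.2)
      = #(univ.filter fun π : Equiv.Perm (Fin n) => π a = q.1 ∧ π b = q.2) := by
  classical
  set τ := moveTwo p.1 p.2 q.1 q.2 with hτ
  refine Finset.card_bij' (fun π _ => π.trans τ) (fun σ _ => σ.trans τ.symm) ?_ ?_ ?_ ?_
  · intro π hπ
    simp only [mem_filter, mem_univ, true_and] at hπ ⊢
    rw [Equiv.trans_apply, Equiv.trans_apply, hπ.1, hπ.2]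
    exact ⟨moveTwo_fst hp hq, moveTwo_snd _ _ _ _⟩
  · intro σ hσ
    simp only [mem_filter, mem_univ, true_and] at hσ ⊢
    rw [Equiv.trans_apply, Equiv.trans_apply, hσ.1, hσ.2]
    constructor
    · rw [Equiv.symm_apply_eq]; exact (moveTwo_fst hp hq).symm
    · rw [Equiv.symm_apply_eq]; exact (moveTwo_snd _ _ _ _).symm
  · intro π _; ext z; simp
  · intro σ _; ext z; simp

/-- fibers over different source pairs have the same cardinality -/
lemma fiber_card_eq_source [DecidableEq (Equiv.Perm (Fin n))] (a b a' b' : Fin n)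
    (hab : a ≠ b) (hab' : a' ≠ b') (p : Fin n × Fin n) :
    #(univ.filter fun π : Equiv.Perm (Fin n) => π a = p.1 ∧ π b = p.2)
      = #(univ.filter fun π : Equiv.Perm (Fin n) => π a' = p.1 ∧ π b' = p.2) := by
  classical
  set τ := moveTwo a' b' a b with hτ
  have ha : τ.symm a = a' := by rw [Equiv.symm_apply_eq]; exact (moveTwo_fst hab' hab).symm
  have hb : τ.symm b = b' := by rw [Equiv.symm_apply_eq]; exact (moveTwo_snd _ _ _ _).symm
  refine Finset.card_bij' (fun π _ => τ.trans π) (fun σ _ => τ.symm.trans σ) ?_ ?_ ?_ ?_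
  · intro π hπ
    simp only [mem_filter, mem_univ, true_and] at hπ ⊢
    rw [Equiv.trans_apply, Equiv.trans_apply, moveTwo_fst hab' hab, moveTwo_snd]
    exact hπ
  · intro σ hσ
    simp only [mem_filter, mem_univ, true_and] at hσ ⊢
    rw [Equiv.trans_apply, Equiv.trans_apply, ha, hb]
    exact hσ
  · intro π _; ext z; simp
  · intro σ _; ext z; simp

lemma exists_lowWeight (hn : 4 ≤ n) (m : Fin n → Fin n → ℕ)
    (hsum : ∑ p ∈ univ.offDiag, m p.1 p.2 ≤ n * (2*n-6)) :
    ∃ π : Equiv.Perm (Fin n), haveI : NeZero n := ⟨by omega⟩; cycWeight m π ≤ 2*n-5 := by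
  classical
  haveI : NeZero n := ⟨by omega⟩
  by_contra hno
  push_neg at hno
  have hno' : ∀ π : Equiv.Perm (Fin n), 2*n-4 ≤ cycWeight m π := fun π => by
    have := hno π; omega
  have hv1 : (1 : Fin n).val = 1 := by
    rw [← Nat.cast_one (R := Fin n), Fin.val_natCast]
    exact Nat.mod_eq_of_lt (by omega)
  have h01 : (0 : Fin n) ≠ (1 : Fin n) := by
    intro h
    have h2 := congrArg Fin.val h
    rw [Fin.val_zero, hv1] at h2
    omega
  set F := #(univ.filter fun π : Equiv.Perm (Fin n) => π 0 = (0 : Fin n) ∧ π 1 = (1 : Fin n))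
    with hF
  -- every fiber has cardinality F
  have hfib : ∀ (a b : Fin n), a ≠ b → ∀ p ∈ (univ : Finset (Fin n)).offDiag,
      #(univ.filter fun π : Equiv.Perm (Fin n) => π a = p.1 ∧ π b = p.2) = F := by
    intro a b hab p hp
    rw [mem_offDiag] at hp
    rw [fiber_card_eq_target a b hab p ((0:Fin n), (1:Fin n)) hp.2.2 h01,
      fiber_card_eq_source a b 0 1 hab h01]
  -- the number of permutations
  set N := #(univ : Finset (Equiv.Perm (Fin n))) with hN
  have hNcard : N = F * (n*n - n) := by
    rw [hN, Finset.card_eq_sum_card_fiberwise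
      (f := fun π : Equiv.Perm (Fin n) => (π 0, π 1)) (t := univ.offDiag)
      (fun π _ => by simp [mem_offDiag, h01, Equiv.injective π |>.ne h01])]
    rw [Finset.sum_congr rfl (fun p hp => ?_), Finset.sum_const, smul_eq_mul,
      offDiag_card, card_univ, Fintype.card_fin, mul_comm]
    rw [← hfib 0 1 h01 p hp]
    congr 1
    apply filter_congr
    intro π _
    simp [Prod.ext_iff]
  -- the sum over a fixed position
  have hpos : ∀ (a b : Fin n), a ≠ b →
      ∑ π : Equiv.Perm (Fin n), m (π a) (π b) = F * ∑ p ∈ univ.offDiag, m p.1 p.2 := by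
    intro a b hab
    rw [← Finset.sum_fiberwise_of_maps_to
      (g := fun π : Equiv.Perm (Fin n) => (π a, π b)) (t := univ.offDiag)
      (fun π _ => by simp [mem_offDiag, Equiv.injective π |>.ne hab])]
    rw [Finset.mul_sum]
    refine Finset.sum_congr rfl fun p hp => ?_
    have : ∀ π ∈ univ.filter fun π : Equiv.Perm (Fin n) => (π a, π b) = p,
        m (π a) (π b) = m p.1 p.2 := by
      intro π hπ
      rw [mem_filter] at hπ
      rw [← hπ.2]
    rw [Finset.sum_congr rfl this, Finset.sum_const, smul_eq_mul]
    congr 1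
    rw [← hfib a b hab p hp]
    congr 1
    apply filter_congr
    intro π _
    simp [Prod.ext_iff]
  -- total sum over permutations
  have htot : ∑ π : Equiv.Perm (Fin n), cycWeight m π
      = n * (F * ∑ p ∈ univ.offDiag, m p.1 p.2) := by
    have hcw : (∑ π : Equiv.Perm (Fin n), cycWeight m π)
        = ∑ π : Equiv.Perm (Fin n), ∑ k ∈ Finset.range n,
            m (π ((k : ℕ) : Fin n)) (π ((k+1 : ℕ) : Fin n)) := rfl
    rw [hcw, Finset.sum_comm]
    have hstep : ∀ k ∈ Finset.range n,
        (∑ π : Equiv.Perm (Fin n), m (π ((k : ℕ) : Fin n)) (π ((k+1 : ℕ) : Fin n)))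
          = F * ∑ p ∈ univ.offDiag, m p.1 p.2 := by
      intro k _
      exact hpos _ _ (cast_succ_ne (by omega) k)
    rw [Finset.sum_congr rfl hstep, Finset.sum_const, Finset.card_range, smul_eq_mul]
  have hlow : (2*n-4) * N ≤ ∑ π : Equiv.Perm (Fin n), cycWeight m π := by
    calc (2*n-4) * N = ∑ _π : Equiv.Perm (Fin n), (2*n-4) := by
          rw [Finset.sum_const, smul_eq_mul, mul_comm, hN]
      _ ≤ _ := Finset.sum_le_sum fun π _ => hno' π
  have hFpos : 1 ≤ F := by
    by_contra hF0
    have : F = 0 := by omega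
    rw [this, zero_mul] at hNcard
    have : 0 < N := by rw [hN]; exact Finset.card_pos.2 ⟨1, mem_univ _⟩
    omega
  rw [htot, hNcard] at hlow
  have hlow2 : (2*n-4) * (F * (n*n-n)) ≤ n * (F * (n * (2*n-6))) :=
    le_trans hlow (by
      apply Nat.mul_le_mul_left
      apply Nat.mul_le_mul_left
      exact hsum)
  have hfin : (2*n-4) * (n*n-n) ≤ n * (n * (2*n-6)) := by
    have h1 : (2*n-4) * (F * (n*n-n)) = F * ((2*n-4) * (n*n-n)) := by ring
    have h2 : n * (F * (n * (2*n-6))) = F * (n * (n * (2*n-6))) := by ring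
    rw [h1, h2] at hlow2
    exact Nat.le_of_mul_le_mul_left hlow2 (by omega)
  obtain ⟨k, rfl⟩ : ∃ k, n = k + 4 := ⟨n - 4, by omega⟩
  have e1 : 2*(k+4)-4 = 2*k+4 := by omega
  have e2 : (k+4)*(k+4)-(k+4) = k*k+7*k+12 := by
    have : (k+4)*(k+4) = k*k+8*k+16 := by ring
    omega
  have e3 : 2*(k+4)-6 = 2*k+2 := by omega
  rw [e1, e2, e3] at hfin
  nlinarith


lemma cast_eq_mk [NeZero n] {k : ℕ} (h : k < n) : ((k : ℕ) : Fin n) = ⟨k, h⟩ := by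
  apply Fin.ext; rw [Fin.val_natCast]; exact Nat.mod_eq_of_lt h

def revFun (j : ℕ) (hj : j < n) : Fin n → Fin n := fun k =>
  if h : 1 ≤ k.val ∧ k.val ≤ j then ⟨j + 1 - k.val, by omega⟩ else k

lemma revFun_invol (j : ℕ) (hj : j < n) : Function.Involutive (revFun j hj) := by
  intro k
  unfold revFun
  by_cases h : 1 ≤ k.val ∧ k.val ≤ j
  · rw [dif_pos h]
    have h2 : 1 ≤ (⟨j + 1 - k.val, by omega⟩ : Fin n).val ∧ (⟨j + 1 - k.val, by omega⟩ : Fin n).val ≤ j := by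
      simp only
      omega
    rw [dif_pos h2]
    apply Fin.ext
    simp only
    omega
  · rw [dif_neg h, dif_neg h]

def revPerm (j : ℕ) (hj : j < n) : Equiv.Perm (Fin n) :=
  Function.Involutive.toPerm _ (revFun_invol j hj)

lemma revPerm_apply (j : ℕ) (hj : j < n) (k : Fin n) :
    revPerm j hj k
      = if h : 1 ≤ k.val ∧ k.val ≤ j then (⟨j + 1 - k.val, by omega⟩ : Fin n) else k :=
  rfl

lemma revPerm_weight [NeZero n] (m : Fin n → Fin n → ℕ)
    (hsymm : ∀ x y, m x y = m y x) (π : Equiv.Perm (Fin n)) (j : ℕ)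
    (hj2 : 2 ≤ j) (hjn : j ≤ n - 2) (hn : 4 ≤ n) :
    cycWeight m ((revPerm j (by omega)).trans π)
        + m (π 0) (π 1) + m (π (j : Fin n)) (π ((j+1 : ℕ) : Fin n))
      = cycWeight m π + m (π 0) (π (j : Fin n)) + m (π 1) (π ((j+1 : ℕ) : Fin n)) := by
  have hjlt : j < n := by omega
  set ρ := revPerm j (show j < n by omega) with hρ
  -- pointwise description of the new cycle
  set f : ℕ → ℕ := fun k => m (π (ρ (k : Fin n))) (π (ρ ((k+1 : ℕ) : Fin n))) with hf
  set g : ℕ → ℕ := fun k => m (π (k : Fin n)) (π ((k+1 : ℕ) : Fin n)) with hg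
  have hcw1 : cycWeight m (ρ.trans π) = ∑ k ∈ Finset.range n, f k := rfl
  have hcw2 : cycWeight m π = ∑ k ∈ Finset.range n, g k := rfl
  -- generic decomposition of a cyclic sum
  have hsplit : ∀ F : ℕ → ℕ, ∑ k ∈ Finset.range n, F k
      = F 0 + (∑ k ∈ Finset.Ico 1 j, F k) + F j + ∑ k ∈ Finset.Ico (j+1) n, F k := by
    intro F
    rw [Finset.range_eq_Ico,
      ← Finset.sum_Ico_consecutive F (show 0 ≤ j+1 by omega) (show j+1 ≤ n by omega),
      ← Finset.sum_Ico_consecutive F (show (0:ℕ) ≤ 1 by omega) (show 1 ≤ j+1 by omega)]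
    have h1 : ∑ k ∈ Finset.Ico 0 1, F k = F 0 := by
      rw [← Finset.range_eq_Ico, Finset.sum_range_one]
    have h2 : ∑ k ∈ Finset.Ico 1 (j+1), F k = (∑ k ∈ Finset.Ico 1 j, F k) + F j :=
      Finset.sum_Ico_succ_top (by omega) F
    omega
  -- values of ρ at the relevant casts
  have hρ0 : ρ ((0:ℕ) : Fin n) = ((0:ℕ) : Fin n) := by
    rw [cast_eq_mk (show 0 < n by omega), hρ, revPerm_apply]
    simp
  have hρ1 : ρ ((1:ℕ) : Fin n) = ((j:ℕ) : Fin n) := by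
    rw [cast_eq_mk (show 1 < n by omega), cast_eq_mk hjlt, hρ, revPerm_apply]
    rw [dif_pos (by refine ⟨?_, ?_⟩ <;> simp only [] <;> omega)]
    apply Fin.ext; simp only []; omega
  have hρj : ρ ((j:ℕ) : Fin n) = ((1:ℕ) : Fin n) := by
    rw [cast_eq_mk hjlt, cast_eq_mk (show 1 < n by omega), hρ, revPerm_apply]
    rw [dif_pos (by refine ⟨?_, ?_⟩ <;> simp only [] <;> omega)]
    apply Fin.ext; simp only []; omega
  have hρj1 : ρ ((j+1:ℕ) : Fin n) = ((j+1:ℕ) : Fin n) := by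
    rw [cast_eq_mk (show j+1 < n by omega), hρ, revPerm_apply]
    rw [dif_neg (by simp only []; omega)]
  have hρmid : ∀ i : ℕ, 1 ≤ i → i ≤ j → ρ ((i:ℕ) : Fin n) = ((j+1-i : ℕ) : Fin n) := by
    intro i h1 h2
    rw [cast_eq_mk (show i < n by omega), cast_eq_mk (show j+1-i < n by omega), hρ,
      revPerm_apply]
    rw [dif_pos (by refine ⟨?_, ?_⟩ <;> simp only [] <;> omega)]
  have hρtail : ∀ i : ℕ, j+1 ≤ i → i ≤ n-1 → ρ ((i:ℕ) : Fin n) = ((i:ℕ) : Fin n) := by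
    intro i h1 h2
    rw [cast_eq_mk (show i < n by omega), hρ, revPerm_apply]
    rw [dif_neg (by simp only []; omega)]
  -- piece 1 : k = 0
  have hf0 : f 0 = m (π ((0:ℕ) : Fin n)) (π ((j:ℕ) : Fin n)) := by
    rw [hf]; simp only
    rw [show ((0:ℕ)+1 : ℕ) = (1:ℕ) by omega, hρ0, hρ1]
  have hg0 : g 0 = m (π ((0:ℕ) : Fin n)) (π ((1:ℕ) : Fin n)) := by
    rw [hg]
  -- piece 2 : middle sums agree
  have hmid : ∑ k ∈ Finset.Ico 1 j, f k = ∑ k ∈ Finset.Ico 1 j, g k := by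
    apply Finset.sum_nbij' (i := fun k => j - k) (j := fun k => j - k)
    · intro a ha; rw [Finset.mem_Ico] at ha ⊢; omega
    · intro a ha; rw [Finset.mem_Ico] at ha ⊢; omega
    · intro a ha; rw [Finset.mem_Ico] at ha; omega
    · intro a ha; rw [Finset.mem_Ico] at ha; omega
    · intro a ha
      rw [Finset.mem_Ico] at ha
      rw [hf, hg]; simp only
      rw [hρmid a (by omega) (by omega), hρmid (a+1) (by omega) (by omega)]
      rw [show j+1-a = (j-a)+1 by omega, show j+1-(a+1) = j-a by omega]
      exact hsymm _ _
  -- piece 3 : k = j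
  have hfj : f j = m (π ((1:ℕ) : Fin n)) (π ((j+1:ℕ) : Fin n)) := by
    rw [hf]; simp only
    rw [hρj, hρj1]
  have hgj : g j = m (π ((j:ℕ) : Fin n)) (π ((j+1:ℕ) : Fin n)) := by
    rw [hg]
  -- piece 4 : tails agree
  have htail : ∑ k ∈ Finset.Ico (j+1) n, f k = ∑ k ∈ Finset.Ico (j+1) n, g k := by
    apply Finset.sum_congr rfl
    intro k hk
    rw [Finset.mem_Ico] at hk
    rw [hf, hg]; simp only
    rw [hρtail k (by omega) (by omega)]
    by_cases hke : k + 1 = n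
    · have : ((k+1 : ℕ) : Fin n) = ((0:ℕ) : Fin n) := by
        rw [hke]; simp [Fin.natCast_self]
      rw [this, hρ0]
    · rw [hρtail (k+1) (by omega) (by omega)]
  -- assemble
  have e1 := hsplit f
  have e2 := hsplit g
  rw [hcw1, hcw2, e1, e2, hf0, hfj, hmid, htail, hg0, hgj]
  have c0 : ((0:ℕ) : Fin n) = (0 : Fin n) := by rw [Nat.cast_zero]
  have c1 : ((1:ℕ) : Fin n) = (1 : Fin n) := by rw [Nat.cast_one]
  rw [c0, c1]
  ring


section finhelpers
variable [NeZero n]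

lemma val_one_of (hn : 2 ≤ n) : (1 : Fin n).val = 1 := by
  rw [← Nat.cast_one (R := Fin n), Fin.val_natCast]
  exact Nat.mod_eq_of_lt (by omega)

lemma zero_ne_one_fin (hn : 2 ≤ n) : (0 : Fin n) ≠ (1 : Fin n) := by
  intro h
  have h2 := congrArg Fin.val h
  rw [Fin.val_zero, val_one_of hn] at h2
  omega

lemma fin_succ_ne (hn : 2 ≤ n) (k : Fin n) : k ≠ k + 1 := by
  intro h
  have v1 : (1 : Fin n).val = 1 := val_one_of hn
  have h1 : (k + 1).val = (k.val + 1) % n := by rw [Fin.add_def, v1]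
  have hv := congrArg Fin.val h
  rw [h1] at hv
  have hk := k.isLt
  rcases Nat.lt_or_ge (k.val + 1) n with hlt | hge
  · rw [Nat.mod_eq_of_lt hlt] at hv; omega
  · have he : k.val + 1 = n := by omega
    rw [he, Nat.mod_self] at hv; omega

lemma fin_add_two_ne (hn : 3 ≤ n) (a : Fin n) : a + 1 + 1 ≠ a := by
  intro h
  have v1 : (1 : Fin n).val = 1 := val_one_of (by omega)
  have h1 : (a + 1).val = (a.val + 1) % n := by rw [Fin.add_def, v1]
  have h2 : (a + 1 + 1).val = ((a.val + 1) % n + 1) % n := by rw [Fin.add_def, v1, h1]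
  have hv := congrArg Fin.val h
  rw [h2] at hv
  have ha := a.isLt
  rcases Nat.lt_or_ge (a.val + 1) n with hlt | hge
  · rw [Nat.mod_eq_of_lt hlt] at hv
    rcases Nat.lt_or_ge (a.val + 1 + 1) n with hlt2 | hge2
    · rw [Nat.mod_eq_of_lt hlt2] at hv; omega
    · have he : a.val + 1 + 1 = n := by omega
      rw [he, Nat.mod_self] at hv; omega
  · have he : a.val + 1 = n := by omega
    rw [he, Nat.mod_self, Nat.mod_eq_of_lt (show 0 + 1 < n by omega)] at hv
    omega

lemma cast_val_succ (k : Fin n) : ((k.val + 1 : ℕ) : Fin n) = k + 1 := by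
  rw [Nat.cast_add, Nat.cast_one, Fin.cast_val_eq_self]

lemma cycWeight_eq_finSum (m : Fin n → Fin n → ℕ) (π : Equiv.Perm (Fin n)) :
    cycWeight m π = ∑ x : Fin n, m (π x) (π (x + 1)) := by
  rw [cycWeight,
    ← Fin.sum_univ_eq_sum_range (fun k => m (π ((k : ℕ) : Fin n)) (π ((k+1 : ℕ) : Fin n))) n]
  apply Finset.sum_congr rfl
  intro x _
  rw [Fin.cast_val_eq_self, cast_val_succ]

lemma cycWeight_rot (m : Fin n → Fin n → ℕ) (π : Equiv.Perm (Fin n)) (d : Fin n) :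
    cycWeight m ((Equiv.addRight d).trans π) = cycWeight m π := by
  rw [cycWeight_eq_finSum, cycWeight_eq_finSum]
  apply Fintype.sum_equiv (Equiv.addRight d)
    (fun x => m (((Equiv.addRight d).trans π) x) (((Equiv.addRight d).trans π) (x + 1)))
    (fun x => m (π x) (π (x + 1)))
  intro x
  simp only [Equiv.trans_apply, Equiv.coe_addRight]
  rw [add_right_comm]

end finhelpers


section walks
variable [NeZero n]

lemma cast_inj_le (hn2 : 1 ≤ n) {k l : ℕ} (hk1 : 1 ≤ k) (hk : k ≤ n) (hl1 : 1 ≤ l)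
    (hl : l ≤ n) (h : (k : Fin n) = (l : Fin n)) : k = l := by
  have hv := congrArg Fin.val h
  rw [Fin.val_natCast, Fin.val_natCast] at hv
  rcases Nat.lt_or_ge k n with hkn | hkn
  · rw [Nat.mod_eq_of_lt hkn] at hv
    rcases Nat.lt_or_ge l n with hln | hln
    · rw [Nat.mod_eq_of_lt hln] at hv; omega
    · have : l = n := by omega
      rw [this, Nat.mod_self] at hv; omega
  · have hkn' : k = n := by omega
    rw [hkn', Nat.mod_self] at hv
    rcases Nat.lt_or_ge l n with hln | hln
    · rw [Nat.mod_eq_of_lt hln] at hv; omega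
    · omega

/-- the walk along `f k, f (k+1), …, f (k+d)` in the complete graph -/
def walkSeg (f : ℕ → Fin n) (hne : ∀ i, f i ≠ f (i+1)) :
    (d k : ℕ) → (⊤ : SimpleGraph (Fin n)).Walk (f k) (f (k + d))
  | 0, _ => SimpleGraph.Walk.nil
  | (d+1), k =>
      SimpleGraph.Walk.cons (by rw [SimpleGraph.top_adj]; exact hne k)
        ((walkSeg f hne d (k+1)).copy rfl (congrArg f (by omega)))

lemma walkSeg_support (f : ℕ → Fin n) (hne : ∀ i, f i ≠ f (i+1)) (d k : ℕ) :
    (walkSeg f hne d k).support = (List.range (d+1)).map (fun i => f (k+i)) := by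
  induction d generalizing k with
  | zero =>
    rw [walkSeg, SimpleGraph.Walk.support_nil, show List.range 1 = [0] from rfl,
      List.map_singleton]
    rfl
  | succ d ih =>
    rw [walkSeg, SimpleGraph.Walk.support_cons, SimpleGraph.Walk.support_copy, ih]
    rw [List.range_succ_eq_map (n := d+1), List.map_cons, List.map_map]
    congr 1
    apply List.map_congr_left
    intro i _
    simp only [Function.comp_apply]
    congr 1
    omega

lemma walkSeg_edges (f : ℕ → Fin n) (hne : ∀ i, f i ≠ f (i+1)) (d k : ℕ) :
    (walkSeg f hne d k).edges = (List.range d).map (fun i => s(f (k+i), f (k+i+1))) := by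
  induction d generalizing k with
  | zero => simp [walkSeg]
  | succ d ih =>
    rw [walkSeg, SimpleGraph.Walk.edges_cons, SimpleGraph.Walk.edges_copy, ih]
    rw [List.range_succ_eq_map (n := d), List.map_cons, List.map_map]
    refine congrArg₂ List.cons rfl ?_
    apply List.map_congr_left
    intro i _
    simp only [Function.comp_apply]
    rw [show k+1+i = k+(i+1) from by omega]

end walks

section graphs
variable (𝒢 : Fin n → SimpleGraph (Fin n)) [∀ i, DecidableRel (𝒢 i).Adj]




/-- number of graphs in the family missing the pair (x,y) -/
def mlt (x y : Fin n) : ℕ := #(univ.filter fun i => ¬ (𝒢 i).Adj x y)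

lemma mlt_symm (x y : Fin n) : mlt 𝒢 x y = mlt 𝒢 y x := by
  unfold mlt; congr 1; apply filter_congr; intro i _; simp [adj_comm]

lemma mlt_le (x y : Fin n) : mlt 𝒢 x y ≤ n := by
  calc mlt 𝒢 x y ≤ #(univ : Finset (Fin n)) := card_filter_le _ _
  _ = n := by simp

lemma mlt_eq_of_empty {x y : Fin n}
    (h : (univ.filter fun i => (𝒢 i).Adj x y) = ∅) : mlt 𝒢 x y = n := by
  have := card_filter_add_card_filter_not (s := (univ : Finset (Fin n)))
    (p := fun i => (𝒢 i).Adj x y)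
  rw [h] at this
  simp only [card_empty, zero_add, card_univ, Fintype.card_fin] at this
  simpa [mlt] using this

/-- ordered bad pairs for a single graph -/
def badPairs (i : Fin n) : Finset (Fin n × Fin n) :=
  univ.offDiag.filter fun p => ¬ (𝒢 i).Adj p.1 p.2

lemma choose_two (k : ℕ) : 2 * (k.choose 2) = k * (k-1) := by
  rw [Nat.choose_two_right, Nat.mul_div_cancel']
  rcases Nat.even_or_odd k with h | h
  · exact Dvd.dvd.mul_right h.two_dvd _
  · rcases k with _ | k
    · simp
    · have : Even k := by rcases h with ⟨m, hm⟩; exact ⟨m, by omega⟩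
      simpa using Dvd.dvd.mul_left this.two_dvd _

lemma card_badPairs_le (hn : 4 ≤ n) (i : Fin n)
    (he : (n-1).choose 2 + 2 ≤ #(𝒢 i).edgeFinset) :
    #(badPairs 𝒢 i) ≤ 2*n - 6 := by
  haveI : DecidablePred (fun p : Fin n × Fin n => (𝒢 i).Adj p.1 p.2) :=
    fun p => inferInstanceAs (Decidable ((𝒢 i).Adj p.1 p.2))
  obtain ⟨k, hk⟩ : ∃ k, n = k + 4 := ⟨n - 4, by omega⟩
  have hsplit := card_filter_add_card_filter_not (s := univ.offDiag)
    (p := fun p : Fin n × Fin n => (𝒢 i).Adj p.1 p.2)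
  have hod : #(univ.offDiag : Finset (Fin n × Fin n)) = n * n - n := by
    rw [offDiag_card]; simp
  have hadj : (univ.offDiag.filter fun p : Fin n × Fin n => (𝒢 i).Adj p.1 p.2)
      = univ.filter fun p : Fin n × Fin n => (𝒢 i).Adj p.1 p.2 := by
    ext p
    simp only [mem_filter, mem_offDiag, mem_univ, true_and]
    exact ⟨fun h => h.2, fun h => ⟨h.ne, h⟩⟩
  have hfil : #(univ.filter fun p : Fin n × Fin n => (𝒢 i).Adj p.1 p.2)
      = 2 * #(𝒢 i).edgeFinset := by
    rw [(𝒢 i).two_mul_card_edgeFinset]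
    congr 1
    ext ⟨x, y⟩
    simp
  rw [hadj, hfil, hod] at hsplit
  have hc2 : 2 * ((n-1).choose 2) = (n-1)*(n-2) := by
    rw [choose_two]; congr 1
  have h1 : (n-1)*(n-2) = (k+3)*(k+2) := by congr 1 <;> omega
  have h2 : (k+3)*(k+2) = k*k + 5*k + 6 := by ring
  have h3 : n*n = k*k + 8*k + 16 := by rw [hk]; ring
  have hb : #(badPairs 𝒢 i)
      = #(univ.offDiag.filter fun p : Fin n × Fin n => ¬ (𝒢 i).Adj p.1 p.2) := by
    unfold badPairs
    congr 1
    ext p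
    simp
  omega



lemma sum_mlt_le (hb : ∀ i, #(badPairs 𝒢 i) ≤ 2*n-6) :
    ∑ p ∈ univ.offDiag, mlt 𝒢 p.1 p.2 ≤ n * (2*n-6) := by
  have h1 : ∀ p : Fin n × Fin n, mlt 𝒢 p.1 p.2
      = ∑ i : Fin n, if ¬ (𝒢 i).Adj p.1 p.2 then 1 else 0 := by
    intro p; rw [mlt, card_filter]
  calc ∑ p ∈ univ.offDiag, mlt 𝒢 p.1 p.2
      = ∑ p ∈ univ.offDiag, ∑ i : Fin n, if ¬ (𝒢 i).Adj p.1 p.2 then 1 else 0 := by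
        exact Finset.sum_congr rfl fun p _ => h1 p
    _ = ∑ i : Fin n, ∑ p ∈ univ.offDiag, if ¬ (𝒢 i).Adj p.1 p.2 then 1 else 0 :=
        Finset.sum_comm
    _ = ∑ i : Fin n, #(badPairs 𝒢 i) := by
        refine Finset.sum_congr rfl fun i _ => ?_
        rw [badPairs, card_filter]
    _ ≤ ∑ _i : Fin n, (2*n-6) := Finset.sum_le_sum fun i _ => hb i
    _ = n * (2*n-6) := by simp [mul_comm]

def Ddeg (i : Fin n) (a : Fin n) : ℕ := #((univ.erase a).filter fun u => ¬ (𝒢 i).Adj a u)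
def Tdeg (a : Fin n) : ℕ := ∑ u ∈ univ.erase a, mlt 𝒢 a u

lemma Tdeg_eq (a : Fin n) : Tdeg 𝒢 a = ∑ i : Fin n, Ddeg 𝒢 i a := by
  calc Tdeg 𝒢 a = ∑ u ∈ univ.erase a, ∑ i : Fin n, if ¬ (𝒢 i).Adj a u then 1 else 0 := by
        refine Finset.sum_congr rfl fun u _ => ?_
        rw [mlt, card_filter]
    _ = ∑ i : Fin n, ∑ u ∈ univ.erase a, if ¬ (𝒢 i).Adj a u then 1 else 0 := Finset.sum_comm
    _ = ∑ i : Fin n, Ddeg 𝒢 i a := by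
        refine Finset.sum_congr rfl fun i _ => ?_
        rw [Ddeg, card_filter]

lemma Ddeg_pair_le (hn : 4 ≤ n) {a b : Fin n} (hab : a ≠ b) (i : Fin n)
    (hbp : #(badPairs 𝒢 i) ≤ 2*n-6) : Ddeg 𝒢 i a + Ddeg 𝒢 i b ≤ n - 2 := by
  classical
  set BP := badPairs 𝒢 i with hBP
  have cardA : ∀ x : Fin n, #(BP.filter fun p => p.1 = x) = Ddeg 𝒢 i x := by
    intro x
    rw [Ddeg]
    apply Finset.card_bij (fun p _ => p.2)
    · rintro ⟨u, v⟩ hp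
      simp only [hBP, badPairs, mem_filter, mem_offDiag, mem_univ, true_and] at hp
      obtain ⟨⟨hne, hnadj⟩, h1⟩ := hp
      subst h1
      simp only [mem_filter, mem_erase, mem_univ, and_true, true_and]
      exact ⟨Ne.symm hne, hnadj⟩
    · rintro ⟨u, v⟩ hp ⟨u', v'⟩ hp' h
      simp only [hBP, badPairs, mem_filter] at hp hp'
      simp only at h
      rw [Prod.ext_iff]
      exact ⟨hp.2.trans hp'.2.symm, h⟩
    · intro u hu
      simp only [mem_filter, mem_erase, mem_univ, and_true, true_and] at hu
      refine ⟨(x, u), ?_, rfl⟩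
      simp only [hBP, badPairs, mem_filter, mem_offDiag, mem_univ, true_and]
      exact ⟨⟨Ne.symm hu.1, hu.2⟩, trivial⟩
  have cardB : ∀ x : Fin n, #(BP.filter fun p => p.2 = x) = Ddeg 𝒢 i x := by
    intro x
    rw [Ddeg]
    apply Finset.card_bij (fun p _ => p.1)
    · rintro ⟨u, v⟩ hp
      simp only [hBP, badPairs, mem_filter, mem_offDiag, mem_univ, true_and] at hp
      obtain ⟨⟨hne, hnadj⟩, h1⟩ := hp
      subst h1
      simp only [mem_filter, mem_erase, mem_univ, and_true, true_and]
      exact ⟨hne, fun h => hnadj ((𝒢 i).adj_comm _ _ |>.1 h)⟩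
    · rintro ⟨u, v⟩ hp ⟨u', v'⟩ hp' h
      simp only [hBP, badPairs, mem_filter] at hp hp'
      simp only at h
      rw [Prod.ext_iff]
      exact ⟨h, hp.2.trans hp'.2.symm⟩
    · intro u hu
      simp only [mem_filter, mem_erase, mem_univ, and_true, true_and] at hu
      refine ⟨(u, x), ?_, rfl⟩
      simp only [hBP, badPairs, mem_filter, mem_offDiag, mem_univ, true_and]
      exact ⟨⟨hu.1, fun h => hu.2 ((𝒢 i).adj_comm _ _ |>.1 h)⟩, trivial⟩
  set Q1 := BP.filter fun p => p.1 = a ∨ p.2 = b with hQ1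
  set Q2 := BP.filter fun p => p.1 = b ∨ p.2 = a with hQ2
  have hQ1card : Ddeg 𝒢 i a + Ddeg 𝒢 i b ≤ #Q1 + 1 := by
    have hu : Q1 = (BP.filter fun p => p.1 = a) ∪ (BP.filter fun p => p.2 = b) := by
      rw [hQ1, filter_or]
    have hinter : (BP.filter fun p => p.1 = a) ∩ (BP.filter fun p => p.2 = b) ⊆ {(a, b)} := by
      intro p hp
      simp only [mem_inter, mem_filter] at hp
      simp only [mem_singleton, Prod.ext_iff]
      exact ⟨hp.1.2, hp.2.2⟩
    have := card_union_add_card_inter (BP.filter fun p => p.1 = a) (BP.filter fun p => p.2 = b)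
    have h2 : #((BP.filter fun p => p.1 = a) ∩ (BP.filter fun p => p.2 = b)) ≤ 1 := by
      calc _ ≤ #({(a,b)} : Finset (Fin n × Fin n)) := card_le_card hinter
        _ = 1 := card_singleton _
    rw [← hu] at this
    rw [cardA, cardB] at this
    omega
  have hQ2card : Ddeg 𝒢 i a + Ddeg 𝒢 i b ≤ #Q2 + 1 := by
    have hu : Q2 = (BP.filter fun p => p.1 = b) ∪ (BP.filter fun p => p.2 = a) := by
      rw [hQ2, filter_or]
    have hinter : (BP.filter fun p => p.1 = b) ∩ (BP.filter fun p => p.2 = a) ⊆ {(b, a)} := by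
      intro p hp
      simp only [mem_inter, mem_filter] at hp
      simp only [mem_singleton, Prod.ext_iff]
      exact ⟨hp.1.2, hp.2.2⟩
    have := card_union_add_card_inter (BP.filter fun p => p.1 = b) (BP.filter fun p => p.2 = a)
    have h2 : #((BP.filter fun p => p.1 = b) ∩ (BP.filter fun p => p.2 = a)) ≤ 1 := by
      calc _ ≤ #({(b,a)} : Finset (Fin n × Fin n)) := card_le_card hinter
        _ = 1 := card_singleton _
    rw [← hu] at this
    rw [cardA, cardB] at this
    omega
  have hdisj : Disjoint Q1 Q2 := by
    rw [Finset.disjoint_left]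
    rintro ⟨u, v⟩ h1 h2
    simp only [hQ1, hQ2, mem_filter, hBP, badPairs, mem_offDiag, mem_univ, true_and] at h1 h2
    obtain ⟨⟨huv, -⟩, hc1⟩ := h1
    obtain ⟨-, hc2⟩ := h2
    rcases hc1 with rfl | rfl <;> rcases hc2 with h | h <;> first
      | exact hab h.symm | exact huv h.symm | exact hab h | exact huv h
  have hsub : #Q1 + #Q2 ≤ #BP := by
    rw [← card_union_of_disjoint hdisj]
    exact card_le_card (union_subset (filter_subset _ _) (filter_subset _ _))
  omega

lemma Tdeg_pair_le (hn : 4 ≤ n) {a b : Fin n} (hab : a ≠ b)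
    (hbp : ∀ i, #(badPairs 𝒢 i) ≤ 2*n-6) : Tdeg 𝒢 a + Tdeg 𝒢 b ≤ n * (n-2) := by
  rw [Tdeg_eq, Tdeg_eq, ← Finset.sum_add_distrib]
  calc ∑ i : Fin n, (Ddeg 𝒢 i a + Ddeg 𝒢 i b) ≤ ∑ _i : Fin n, (n-2) :=
        Finset.sum_le_sum fun i _ => Ddeg_pair_le 𝒢 hn hab i (hbp i)
    _ = n * (n-2) := by simp [mul_comm]


theorem exists_rainbow_perm [NeZero n] (hn : 4 ≤ n)
    (he : ∀ i, (n-1).choose 2 + 2 ≤ #(𝒢 i).edgeFinset) :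
    ∃ (π : Equiv.Perm (Fin n)) (f : Fin n → Fin n), Function.Injective f ∧
      ∀ k : Fin n, (𝒢 (f k)).Adj (π k) (π (k + 1)) := by
  classical
  set m : Fin n → Fin n → ℕ := mlt 𝒢 with hm
  have hbp : ∀ i, #(badPairs 𝒢 i) ≤ 2*n-6 := fun i => card_badPairs_le 𝒢 hn i (he i)
  have hsum : ∑ p ∈ univ.offDiag, m p.1 p.2 ≤ n * (2*n-6) := sum_mlt_le 𝒢 hbp
  -- a weight-minimal cyclic ordering
  obtain ⟨π₀, -, hmin⟩ := Finset.exists_min_image (univ : Finset (Equiv.Perm (Fin n)))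
    (cycWeight m) ⟨1, mem_univ 1⟩
  have hmin' : ∀ σ : Equiv.Perm (Fin n), cycWeight m π₀ ≤ cycWeight m σ :=
    fun σ => hmin σ (mem_univ σ)
  obtain ⟨πlow, hlow⟩ := exists_lowWeight hn m hsum
  have hW : cycWeight m π₀ ≤ 2*n-5 := (hmin' πlow).trans hlow
  have hWfin : cycWeight m π₀ = ∑ x : Fin n, m (π₀ x) (π₀ (x + 1)) := cycWeight_eq_finSum m π₀
  -- Hall system
  set t : Fin n → Finset (Fin n) :=
    fun k => univ.filter fun i => (𝒢 i).Adj (π₀ k) (π₀ (k + 1)) with ht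
  by_cases hHall : ∀ s : Finset (Fin n), #s ≤ #(s.biUnion t)
  · obtain ⟨f, hinj, hmem⟩ := (Finset.all_card_le_biUnion_card_iff_exists_injective t).1 hHall
    refine ⟨π₀, f, hinj, fun k => ?_⟩
    have := hmem k
    rw [ht, mem_filter] at this
    exact this.2
  -- Hall fails : derive a contradiction
  · exfalso
    push_neg at hHall
    obtain ⟨A, hA⟩ := hHall
    set B : Finset (Fin n) := univ \ A.biUnion t with hB
    have hBcard : #B = n - #(A.biUnion t) := by
      rw [hB, card_sdiff_of_subset (subset_univ _), card_univ, Fintype.card_fin]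
    have hbiUle : #(A.biUnion t) ≤ #A - 1 := by omega
    have hAub : #A ≤ n := by
      calc #A ≤ #(univ : Finset (Fin n)) := card_le_card (subset_univ _)
        _ = n := by simp
    have hBlb : n - #A + 1 ≤ #B := by omega
    have hBbad : ∀ c ∈ B, ∀ k ∈ A, ¬ (𝒢 c).Adj (π₀ k) (π₀ (k + 1)) := by
      intro c hc k hk hadj
      rw [hB, mem_sdiff] at hc
      exact hc.2 (mem_biUnion.2 ⟨k, hk, by rw [ht, mem_filter]; exact ⟨mem_univ _, hadj⟩⟩)
    have hmk : ∀ k ∈ A, #B ≤ m (π₀ k) (π₀ (k + 1)) := by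
      intro k hk
      rw [hm, mlt]
      apply card_le_card
      intro c hc
      rw [mem_filter]
      exact ⟨mem_univ _, hBbad c hc k hk⟩
    have hAne : A.Nonempty := by
      rw [← card_pos]; omega
    -- A has at most n-3 elements (pairing argument)
    have hA3 : #A ≤ n - 3 := by
      obtain ⟨c, hc⟩ : B.Nonempty := by rw [← card_pos]; omega
      have hinj2 : 2 * #A ≤ #(badPairs 𝒢 c) := by
        have hcard : #(A ×ˢ (univ : Finset Bool)) = 2 * #A := by
          rw [card_product, card_univ]
          simp [Fintype.card_bool, mul_comm]
        rw [← hcard]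
        apply Finset.card_le_card_of_injOn
          (f := fun p : Fin n × Bool =>
            if p.2 then ((π₀ p.1), (π₀ (p.1 + 1))) else ((π₀ (p.1 + 1)), (π₀ p.1)))
        · rintro ⟨k, b⟩ hkb
          rw [mem_coe, mem_product] at hkb
          have hne : π₀ k ≠ π₀ (k + 1) :=
            fun h => fin_succ_ne (by omega) k (π₀.injective h)
          have hnadj : ¬ (𝒢 c).Adj (π₀ k) (π₀ (k + 1)) := hBbad c hc k hkb.1
          rw [badPairs, mem_coe, mem_filter, mem_offDiag]
          cases b
          · simp only [if_neg Bool.false_ne_true]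
            exact ⟨⟨mem_univ _, mem_univ _, hne.symm⟩,
              fun h => hnadj (((𝒢 c).adj_comm _ _).1 h)⟩
          · simp only [if_pos rfl]
            exact ⟨⟨mem_univ _, mem_univ _, hne⟩, hnadj⟩
        · rintro ⟨k, bk⟩ hk ⟨l, bl⟩ hl heq
          simp only at heq
          cases bk <;> cases bl <;> simp only [if_pos, if_neg Bool.false_ne_true] at heq
          · have h1 := π₀.injective (congrArg Prod.fst heq)
            have h2 := π₀.injective (congrArg Prod.snd heq)
            rw [Prod.ext_iff]
            exact ⟨by rwa [add_left_inj] at h1, rfl⟩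
          · exfalso
            have h1 := π₀.injective (congrArg Prod.fst heq)
            have h2 := π₀.injective (congrArg Prod.snd heq)
            exact fin_add_two_ne (by omega) l ((congrArg (fun z => z + 1) h2.symm).trans h1)
          · exfalso
            have h1 := π₀.injective (congrArg Prod.fst heq)
            have h2 := π₀.injective (congrArg Prod.snd heq)
            exact fin_add_two_ne (by omega) k ((congrArg (fun z => z + 1) h2).trans h1.symm)
          · have h1 := π₀.injective (congrArg Prod.fst heq)
            rw [Prod.ext_iff]
            exact ⟨h1, rfl⟩
      have := hbp c
      omega
    -- lower bound on the weight from the failing set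
    have hWlb : #A * #B ≤ cycWeight m π₀ := by
      rw [hWfin]
      calc #A * #B = ∑ _k ∈ A, #B := by rw [Finset.sum_const, smul_eq_mul]
        _ ≤ ∑ k ∈ A, m (π₀ k) (π₀ (k + 1)) := Finset.sum_le_sum hmk
        _ ≤ ∑ x : Fin n, m (π₀ x) (π₀ (x + 1)) :=
            Finset.sum_le_sum_of_subset (subset_univ _)
    -- case on the size of A
    rcases Nat.lt_or_ge #A 2 with hA1 | hA2
    · -- #A = 1 : a universally missing edge, contradicted by a 2-opt exchange
      have hA1' : #A = 1 := by omega
      obtain ⟨j0, rfl⟩ := Finset.card_eq_one.1 hA1'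
      have htj0 : t j0 = ∅ := by
        rw [← Finset.card_eq_zero]
        rw [Finset.singleton_biUnion, Finset.card_singleton] at hA
        omega
      have hheavy : m (π₀ j0) (π₀ (j0 + 1)) = n := by
        rw [hm]
        apply mlt_eq_of_empty
        rw [ht] at htj0
        exact htj0
      -- rotate so the heavy edge is at position 0
      set π₁ : Equiv.Perm (Fin n) := (Equiv.addRight j0).trans π₀ with hπ₁
      have hrot : cycWeight m π₁ = cycWeight m π₀ := cycWeight_rot m π₀ j0
      have hπ₁0 : π₁ 0 = π₀ j0 := by
        rw [hπ₁]; simp only [Equiv.trans_apply, Equiv.coe_addRight, zero_add]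
      have hπ₁1 : π₁ 1 = π₀ (j0 + 1) := by
        rw [hπ₁]; simp only [Equiv.trans_apply, Equiv.coe_addRight]
        rw [add_comm]
      have hheavy1 : m (π₁ 0) (π₁ 1) = n := by rw [hπ₁0, hπ₁1]; exact hheavy
      set a : Fin n := π₁ 0 with hav
      set b : Fin n := π₁ 1 with hbv
      have hab : a ≠ b := by
        rw [hav, hbv]
        intro h
        exact zero_ne_one_fin (by omega) (π₁.injective h)
      -- every 2-opt exchange is non-improving
      have hexch : ∀ j : ℕ, 2 ≤ j → j ≤ n - 2 →
          n ≤ m a (π₁ ((j : ℕ) : Fin n)) + m b (π₁ ((j+1 : ℕ) : Fin n)) := by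
        intro j hj2 hjn
        have hid := revPerm_weight m (fun x y => mlt_symm 𝒢 x y) π₁ j hj2 hjn hn
        have hge : cycWeight m π₁ ≤ cycWeight m ((revPerm j (by omega)).trans π₁) := by
          rw [hrot]
          exact hmin' _
        have hsy1 : m (π₁ ((j : ℕ) : Fin n)) a = m a (π₁ ((j : ℕ) : Fin n)) := mlt_symm 𝒢 _ _
        rw [hheavy1] at hid
        -- hid : W_rev + n + m_j = W₁ + m (π₁ 0) (π₁ ↑j) + m (π₁ 1) (π₁ ↑(j+1))
        rw [← hav, ← hbv] at hid
        omega
      -- sum the exchange inequalities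
      have hsumlb : n * (n - 3) ≤
          ∑ j ∈ Finset.Ico 2 (n-1),
            (m a (π₁ ((j : ℕ) : Fin n)) + m b (π₁ ((j+1 : ℕ) : Fin n))) := by
        calc n * (n-3) = ∑ _j ∈ Finset.Ico 2 (n-1), n := by
              rw [Finset.sum_const, Nat.card_Ico, smul_eq_mul]
              have : n - 1 - 2 = n - 3 := by omega
              rw [this, mul_comm]
          _ ≤ _ := Finset.sum_le_sum fun j hj => by
              rw [Finset.mem_Ico] at hj
              exact hexch j hj.1 (by omega)
      -- upper bounds via the vertex-degree sums
      have hS1 : (∑ j ∈ Finset.Ico 2 (n-1), m a (π₁ ((j : ℕ) : Fin n))) + m a b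
          ≤ Tdeg 𝒢 a := by
        have hinjJ : ∀ x ∈ Finset.Ico 2 (n-1), ∀ y ∈ Finset.Ico 2 (n-1),
            π₁ ((x : ℕ) : Fin n) = π₁ ((y : ℕ) : Fin n) → x = y := by
          intro x hx y hy hxy
          rw [Finset.mem_Ico] at hx hy
          exact cast_inj_lt (by omega) (by omega) (π₁.injective hxy)
        have himg : ∑ j ∈ Finset.Ico 2 (n-1), m a (π₁ ((j : ℕ) : Fin n))
            = ∑ u ∈ (Finset.Ico 2 (n-1)).image (fun j => π₁ ((j : ℕ) : Fin n)), m a u :=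
          (Finset.sum_image hinjJ).symm
        have hbni : b ∉ (Finset.Ico 2 (n-1)).image (fun j => π₁ ((j : ℕ) : Fin n)) := by
          rw [Finset.mem_image]
          rintro ⟨j, hj, hjb⟩
          rw [Finset.mem_Ico] at hj
          have : ((j : ℕ) : Fin n) = 1 := π₁.injective (by rw [hjb, hbv])
          have h1 : ((1 : ℕ) : Fin n) = (1 : Fin n) := Nat.cast_one
          have := cast_inj_lt (show j < n by omega) (show 1 < n by omega)
            (by rw [this, ← h1])
          omega
        have hsub : insert b ((Finset.Ico 2 (n-1)).image (fun j => π₁ ((j : ℕ) : Fin n)))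
            ⊆ univ.erase a := by
          intro u hu
          rw [Finset.mem_insert] at hu
          rw [Finset.mem_erase]
          refine ⟨?_, mem_univ _⟩
          rcases hu with rfl | hu
          · exact hab.symm
          · rw [Finset.mem_image] at hu
            obtain ⟨j, hj, rfl⟩ := hu
            rw [Finset.mem_Ico] at hj
            intro h
            have : ((j : ℕ) : Fin n) = 0 := π₁.injective (by rw [h, hav])
            have h0 : ((0 : ℕ) : Fin n) = (0 : Fin n) := Nat.cast_zero
            have := cast_inj_lt (show j < n by omega) (show 0 < n by omega)
              (by rw [this, ← h0])
            omega
        calc (∑ j ∈ Finset.Ico 2 (n-1), m a (π₁ ((j : ℕ) : Fin n))) + m a b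
            = ∑ u ∈ insert b ((Finset.Ico 2 (n-1)).image (fun j => π₁ ((j : ℕ) : Fin n))),
                m a u := by
              rw [Finset.sum_insert hbni, himg]; omega
          _ ≤ ∑ u ∈ univ.erase a, m a u := Finset.sum_le_sum_of_subset hsub
          _ = Tdeg 𝒢 a := rfl
      have hS2 : (∑ j ∈ Finset.Ico 2 (n-1), m b (π₁ ((j+1 : ℕ) : Fin n))) + m a b
          ≤ Tdeg 𝒢 b := by
        have hinjJ : ∀ x ∈ Finset.Ico 2 (n-1), ∀ y ∈ Finset.Ico 2 (n-1),
            π₁ ((x+1 : ℕ) : Fin n) = π₁ ((y+1 : ℕ) : Fin n) → x = y := by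
          intro x hx y hy hxy
          rw [Finset.mem_Ico] at hx hy
          have := cast_inj_lt (show x+1 < n by omega) (show y+1 < n by omega)
            (π₁.injective hxy)
          omega
        have himg : ∑ j ∈ Finset.Ico 2 (n-1), m b (π₁ ((j+1 : ℕ) : Fin n))
            = ∑ u ∈ (Finset.Ico 2 (n-1)).image (fun j => π₁ ((j+1 : ℕ) : Fin n)), m b u :=
          (Finset.sum_image hinjJ).symm
        have hani : a ∉ (Finset.Ico 2 (n-1)).image (fun j => π₁ ((j+1 : ℕ) : Fin n)) := by
          rw [Finset.mem_image]
          rintro ⟨j, hj, hja⟩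
          rw [Finset.mem_Ico] at hj
          have : ((j+1 : ℕ) : Fin n) = 0 := π₁.injective (by rw [hja, hav])
          have h0 : ((0 : ℕ) : Fin n) = (0 : Fin n) := Nat.cast_zero
          have := cast_inj_lt (show j+1 < n by omega) (show 0 < n by omega)
            (by rw [this, ← h0])
          omega
        have hsub : insert a ((Finset.Ico 2 (n-1)).image (fun j => π₁ ((j+1 : ℕ) : Fin n)))
            ⊆ univ.erase b := by
          intro u hu
          rw [Finset.mem_insert] at hu
          rw [Finset.mem_erase]
          refine ⟨?_, mem_univ _⟩
          rcases hu with rfl | hu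
          · exact hab
          · rw [Finset.mem_image] at hu
            obtain ⟨j, hj, rfl⟩ := hu
            rw [Finset.mem_Ico] at hj
            intro h
            have : ((j+1 : ℕ) : Fin n) = 1 := π₁.injective (by rw [h, hbv])
            have h1 : ((1 : ℕ) : Fin n) = (1 : Fin n) := Nat.cast_one
            have := cast_inj_lt (show j+1 < n by omega) (show 1 < n by omega)
              (by rw [this, ← h1])
            omega
        have hmba : m b a = m a b := mlt_symm 𝒢 b a
        calc (∑ j ∈ Finset.Ico 2 (n-1), m b (π₁ ((j+1 : ℕ) : Fin n))) + m a b
            = ∑ u ∈ insert a ((Finset.Ico 2 (n-1)).image (fun j => π₁ ((j+1 : ℕ) : Fin n))),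
                m b u := by
              rw [Finset.sum_insert hani, himg, hmba]; omega
          _ ≤ ∑ u ∈ univ.erase b, m b u := Finset.sum_le_sum_of_subset hsub
          _ = Tdeg 𝒢 b := rfl
      have hT := Tdeg_pair_le 𝒢 hn hab hbp
      have hmabn : m a b = n := hheavy1
      have hsplitsum : ∑ j ∈ Finset.Ico 2 (n-1),
            (m a (π₁ ((j : ℕ) : Fin n)) + m b (π₁ ((j+1 : ℕ) : Fin n)))
          = (∑ j ∈ Finset.Ico 2 (n-1), m a (π₁ ((j : ℕ) : Fin n)))
            + ∑ j ∈ Finset.Ico 2 (n-1), m b (π₁ ((j+1 : ℕ) : Fin n)) :=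
        Finset.sum_add_distrib
      -- final numeric contradiction
      obtain ⟨k, rfl⟩ : ∃ k, n = k + 4 := ⟨n - 4, by omega⟩
      have e1 : (k+4) * ((k+4) - 3) = (k+4)*(k+1) := by congr 1
      have e2 : (k+4)*(k+1) = k*k + 5*k + 4 := by ring
      have e3 : (k+4) * ((k+4) - 2) = (k+4)*(k+2) := by congr 1
      have e4 : (k+4)*(k+2) = k*k + 6*k + 8 := by ring
      omega
    · -- 2 ≤ #A ≤ n-3 : quadratic lower bound beats the weight bound
      have hquad : 2 * n - 2 ≤ #A * #B := by
        have hBlb' : n - #A + 1 ≤ #B := hBlb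
        calc 2*n - 2 ≤ #A * (n - #A + 1) := by
              obtain ⟨s2, hs2⟩ : ∃ s2, #A = s2 + 2 := ⟨#A - 2, by omega⟩
              obtain ⟨u, hu⟩ : ∃ u, n = s2 + 5 + u := ⟨n - s2 - 5, by omega⟩
              rw [hs2, hu]
              have hred : s2 + 5 + u - (s2 + 2) + 1 = u + 4 := by omega
              rw [hred]
              have hexp : (s2+2) * (u+4) = s2*u + 4*s2 + 2*u + 8 := by ring
              omega
          _ ≤ #A * #B := Nat.mul_le_mul_left _ hBlb'
      omega

end graphs

end RainbowHC

open Fin.NatCast Fin.CommRing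

/-- Rainbow Ore condition: if `n ≥ 4` and each `G_i` has more than
`(n-1 choose 2) + 1` edges, then the family admits a rainbow Hamiltonian cycle. -/
theorem rainbow_size_hamiltonian {n : ℕ} (hn : 4 ≤ n)
    (𝒢 : Fin n → SimpleGraph (Fin n))
    (h : ∀ i, (n - 1).choose 2 + 1 < (𝒢 i).edgeSet.ncard) :
    HasRainbowHamCycle 𝒢 := by
  classical
  haveI : NeZero n := ⟨by omega⟩
  letI : ∀ i, DecidableRel (𝒢 i).Adj := fun i => Classical.decRel _
  have he : ∀ i, (n-1).choose 2 + 2 ≤ (𝒢 i).edgeFinset.card := by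
    intro i
    have hni := h i
    have hco : (𝒢 i).edgeSet.ncard = (𝒢 i).edgeFinset.card := by
      rw [SimpleGraph.edgeFinset]
      exact Set.ncard_eq_toFinset_card' _
    omega
  obtain ⟨π, f, hfinj, hadj⟩ := RainbowHC.exists_rainbow_perm 𝒢 hn he
  set x : ℕ → Fin n := fun k => π ((k : ℕ) : Fin n) with hx
  have hne : ∀ i, x i ≠ x (i+1) :=
    fun i hxe => RainbowHC.cast_succ_ne (by omega) i (π.injective hxe)
  have hx0 : x (0 + n) = x 0 := by
    rw [hx]
    simp only
    congr 1
    rw [Nat.zero_add, Fin.natCast_self, Nat.cast_zero]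
  set p : (⊤ : SimpleGraph (Fin n)).Walk (x 0) (x 0) :=
    (RainbowHC.walkSeg x hne n 0).copy rfl hx0 with hp
  have hsupp : p.support = (List.range (n+1)).map (fun i => x i) := by
    rw [hp, SimpleGraph.Walk.support_copy, RainbowHC.walkSeg_support]
    apply List.map_congr_left
    intro i _
    rw [Nat.zero_add]
  have hedges : p.edges = (List.range n).map (fun i => s(x i, x (i+1))) := by
    rw [hp, SimpleGraph.Walk.edges_copy, RainbowHC.walkSeg_edges]
    apply List.map_congr_left
    intro i _
    rw [Nat.zero_add]
  have hlen : p.edges.length = n := by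
    rw [hedges, List.length_map, List.length_range]
  have hxinj : ∀ {i j : ℕ}, i < n → j < n → x i = x j → i = j := by
    intro i j hi hj hxij
    exact RainbowHC.cast_inj_lt hi hj (π.injective hxij)
  have hxinj1 : ∀ {i j : ℕ}, 1 ≤ i → i ≤ n → 1 ≤ j → j ≤ n → x i = x j → i = j := by
    intro i j h1 h2 h3 h4 hxij
    exact RainbowHC.cast_inj_le (by omega) h1 h2 h3 h4 (π.injective hxij)
  have hednd : p.edges.Nodup := by
    rw [hedges]
    apply List.Nodup.map_on ?_ (List.nodup_range (n := n))
    intro i hi j hj hsij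
    rw [List.mem_range] at hi hj
    rw [Sym2.eq_iff] at hsij
    rcases hsij with ⟨h1, h2⟩ | ⟨h1, h2⟩
    · exact hxinj hi hj h1
    · exfalso
      have e1 : ((i:ℕ) : Fin n) = ((j+1 : ℕ) : Fin n) := π.injective h1
      have e2 : ((i+1:ℕ) : Fin n) = ((j : ℕ) : Fin n) := π.injective h2
      have e1' : ((i:ℕ) : Fin n) = ((j : ℕ) : Fin n) + 1 := by rw [e1]; push_cast; ring
      have e2' : ((i:ℕ) : Fin n) + 1 = ((j : ℕ) : Fin n) := by rw [← e2]; push_cast; ring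
      exact RainbowHC.fin_add_two_ne (by omega) _
        ((congrArg (fun z => z + 1) e1'.symm).trans e2')
  have hsuppt : p.support.tail = (List.range n).map (fun i => x (i+1)) := by
    rw [hsupp, List.range_succ_eq_map, List.map_cons, List.tail_cons, List.map_map]
    apply List.map_congr_left
    intro i _
    rfl
  have hstnd : p.support.tail.Nodup := by
    rw [hsuppt]
    apply List.Nodup.map_on ?_ (List.nodup_range (n := n))
    intro i hi j hj hxe
    rw [List.mem_range] at hi hj
    have := hxinj1 (by omega) (by omega) (by omega) (by omega) hxe
    omega
  have hpnil : ¬ p.Nil := by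
    intro hnil
    have h0 := SimpleGraph.Walk.nil_iff_length_eq.1 hnil
    have h1 := SimpleGraph.Walk.length_edges p
    omega
  have hpne : p ≠ SimpleGraph.Walk.nil := by
    intro hE
    apply hpnil
    rw [hE]
    exact SimpleGraph.Walk.Nil.nil
  have hmem : ∀ v : Fin n, v ∈ p.support.tail := by
    intro v
    rw [hsuppt, List.mem_map]
    by_cases hw0 : π.symm v = 0
    · refine ⟨n - 1, by rw [List.mem_range]; omega, ?_⟩
      rw [hx]
      simp only
      rw [show n - 1 + 1 = n from by omega]
      rw [show ((n:ℕ) : Fin n) = 0 from Fin.natCast_self n, ← hw0, Equiv.apply_symm_apply]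
    · have hwv : (π.symm v).val ≠ 0 := fun hh => hw0 (Fin.ext hh)
      refine ⟨(π.symm v).val - 1,
        by rw [List.mem_range]; have := (π.symm v).isLt; omega, ?_⟩
      rw [hx]
      simp only
      rw [show (π.symm v).val - 1 + 1 = (π.symm v).val from by omega]
      rw [Fin.cast_val_eq_self, Equiv.apply_symm_apply]
  have hcyc : p.IsHamiltonianCycle := by
    rw [SimpleGraph.Walk.isHamiltonianCycle_isCycle_and_isHamiltonian_tail]
    refine ⟨⟨⟨⟨hednd⟩, hpne⟩, hstnd⟩, ?_⟩
    intro v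
    rw [SimpleGraph.Walk.support_tail_of_not_nil p hpnil]
    exact List.count_eq_one_of_mem hstnd (hmem v)
  refine ⟨x 0, p, hcyc, fun i => f ((i.val : ℕ) : Fin n), ?_, ?_⟩
  · intro i j hij
    have hfij := hfinj hij
    apply Fin.ext
    have hi : (i : ℕ) < n := by have := i.isLt; omega
    have hj : (j : ℕ) < n := by have := j.isLt; omega
    exact RainbowHC.cast_inj_lt hi hj hfij
  · intro i
    have hi : (i : ℕ) < n := by have := i.isLt; omega
    have hget : p.edges.get i = s(x i.val, x (i.val + 1)) := by
      rw [List.get_eq_getElem]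
      have hg : p.edges[(i.val : ℕ)]'(i.isLt) = s(x i.val, x (i.val + 1)) := by
        simp only [hedges, List.getElem_map, List.getElem_range]
      exact hg
    rw [hget, SimpleGraph.mem_edgeSet]
    have hAdj := hadj ((i.val : ℕ) : Fin n)
    have hsucc : ((i.val + 1 : ℕ) : Fin n) = ((i.val : ℕ) : Fin n) + 1 := by push_cast; ring
    show (𝒢 (f ((i.val : ℕ) : Fin n))).Adj (π ((i.val : ℕ) : Fin n)) (π ((i.val + 1 : ℕ) : Fin n))
    rw [hsucc]
    exact hAdj
end

section
/- Let G be a graph and x, y two vertices of G. Then the Kelmans transformation K_{xy}(G) satisfies ρ(K_{xy}(G)) ≥ ρ(G), where ρ denotes the adjacency spectral radius. -/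
open SimpleGraph

section kelmansAux
open Matrix
variable {V : Type*} [Fintype V] [DecidableEq V]


lemma rayleigh_le_s7 (A : Matrix V V ℝ) (hA : A.IsHermitian) (v : V → ℝ) :
    dotProduct v (A *ᵥ v) ≤ (⨆ i, hA.eigenvalues i) * dotProduct v v := by
  cases isEmpty_or_nonempty V
  · simp [dotProduct, iSup_of_empty', Real.sSup_empty]
  · set ρ : ℝ := ⨆ i, hA.eigenvalues i with hρ
    set U : Matrix V V ℝ := (hA.eigenvectorUnitary : Matrix V V ℝ) with hU
    have hsU : star U = Uᵀ := by
      ext i j; simp [Matrix.star_eq_conjTranspose, Matrix.conjTranspose_apply]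
    have hUU : U * star U = 1 := (Matrix.mem_unitaryGroup_iff).mp hA.eigenvectorUnitary.2
    set w : V → ℝ := Uᵀ *ᵥ v with hw
    have hdiag : Matrix.diagonal (RCLike.ofReal ∘ hA.eigenvalues) = Matrix.diagonal hA.eigenvalues := by
      ext i j; simp [Matrix.diagonal_apply]
    have key : A *ᵥ v = U *ᵥ (Matrix.diagonal hA.eigenvalues *ᵥ w) := by
      conv_lhs => rw [hA.spectral_theorem]
      rw [hdiag, hw, ← hsU, Unitary.conjStarAlgAut_apply, Matrix.mulVec_mulVec, Matrix.mulVec_mulVec, Matrix.mul_assoc]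
    have h1 : dotProduct v (A *ᵥ v)
        = dotProduct w (Matrix.diagonal hA.eigenvalues *ᵥ w) := by
      rw [key, Matrix.dotProduct_mulVec, ← Matrix.mulVec_transpose, ← hw]
    have h2 : dotProduct v v = dotProduct w w := by
      nth_rewrite 2 [hw]
      rw [Matrix.dotProduct_mulVec, ← Matrix.mulVec_transpose, Matrix.transpose_transpose,
        Matrix.mulVec_mulVec, ← hsU, hUU, Matrix.one_mulVec]
    rw [h1, h2]
    have hbdd : BddAbove (Set.range hA.eigenvalues) := Set.Finite.bddAbove (Set.finite_range _)
    calc dotProduct w (Matrix.diagonal hA.eigenvalues *ᵥ w)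
        = ∑ i, hA.eigenvalues i * (w i * w i) := by
          simp only [dotProduct, Matrix.mulVec_diagonal]; apply Finset.sum_congr rfl; intros; ring
      _ ≤ ∑ i, ρ * (w i * w i) := by
          apply Finset.sum_le_sum
          intro i _
          exact mul_le_mul_of_nonneg_right (le_ciSup hbdd i) (mul_self_nonneg _)
      _ = ρ * dotProduct w w := by
          rw [← Finset.mul_sum]; simp [dotProduct]



lemma quad_mono (M N : Matrix V V ℝ) (u : V → ℝ) (hu : ∀ i, 0 ≤ u i)
    (P : V → Prop) [DecidablePred P] (p q : V) (hpq : u q ≤ u p)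
    (hMN : ∀ a b, N a b = M a b
      + (if P b then ((if a = p then (1:ℝ) else 0) - (if a = q then 1 else 0)) else 0)
      + (if P a then ((if b = p then (1:ℝ) else 0) - (if b = q then 1 else 0)) else 0)) :
    dotProduct u (M *ᵥ u) ≤ dotProduct u (N *ᵥ u) := by
  classical
  set f : V → V → ℝ :=
    fun a b => if P b then ((if a = p then (1:ℝ) else 0) - (if a = q then 1 else 0)) else 0
    with hf
  have expand : ∀ (Q : Matrix V V ℝ),
      dotProduct u (Q *ᵥ u) = ∑ a, ∑ b, u a * (Q a b * u b) := by
    intro Q; simp [dotProduct, Matrix.mulVec, Finset.mul_sum]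
  have hS : ∀ b, (∑ a, u a * (f a b * u b)) = if P b then (u p - u q) * u b else 0 := by
    intro b
    by_cases hPb : P b
    · simp only [hf, hPb, if_true, sub_mul, mul_sub, ite_mul, one_mul, zero_mul, mul_ite,
        mul_zero, Finset.sum_sub_distrib, Finset.sum_ite_eq', Finset.mem_univ, if_true]
      try ring
    · simp [hf, hPb]
  have hSnn : (0:ℝ) ≤ ∑ b, ∑ a, u a * (f a b * u b) := by
    apply Finset.sum_nonneg
    intro b _
    rw [hS b]
    split
    · exact mul_nonneg (sub_nonneg.mpr hpq) (hu b)
    · exact le_rfl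
  have h1 : (0:ℝ) ≤ ∑ a, ∑ b, u a * (f a b * u b) := by rwa [Finset.sum_comm]
  have h2 : (∑ a, ∑ b, u a * (f b a * u b)) = ∑ a, ∑ b, u a * (f a b * u b) := by
    rw [Finset.sum_comm]
    exact Finset.sum_congr rfl fun a _ => Finset.sum_congr rfl fun b _ => by ring
  rw [expand M, expand N]
  have hterm : ∀ a b, u a * (N a b * u b)
      = u a * (M a b * u b) + u a * (f a b * u b) + u a * (f b a * u b) := by
    intro a b; rw [hMN a b]; simp only [hf]; ring
  simp only [hterm, Finset.sum_add_distrib]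
  nlinarith [h1, h2]


set_option maxHeartbeats 1000000 in
lemma kelmans_entry (G : SimpleGraph V) (x y : V) [DecidablePred (kelSet G x y)] (a b : V) :
    adjMat (kelmans G x y) a b = adjMat G a b
      + (if kelSet G x y b then ((if a = x then (1:ℝ) else 0) - (if a = y then 1 else 0)) else 0)
      + (if kelSet G x y a then ((if b = x then (1:ℝ) else 0) - (if b = y then 1 else 0)) else 0) := by
  classical
  have hab : ∀ (H : SimpleGraph V), adjMat H a b = if H.Adj a b then (1:ℝ) else 0 := by
    intro H; simp [adjMat]
  rw [hab, hab]
  clear hab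
  by_cases hax : a = x <;> by_cases hay : a = y <;>
    by_cases hbx : b = x <;> by_cases hby : b = y <;>
    by_cases hG : G.Adj a b <;>
    by_cases hyb : G.Adj y b <;> by_cases hxb : G.Adj x b <;>
    by_cases hya : G.Adj y a <;> by_cases hxa : G.Adj x a <;>
    simp_all [kelmans, kelSet] <;>
    first
      | exact hxa hG.symm
      | exact hG hya.symm

set_option maxHeartbeats 2000000 in
lemma kelmans_entry_swap (G : SimpleGraph V) (x y : V) [DecidablePred (kelSet G y x)] (a b : V) :
    adjMat (kelmans G x y) (Equiv.swap x y a) (Equiv.swap x y b) = adjMat G a b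
      + (if kelSet G y x b then ((if a = y then (1:ℝ) else 0) - (if a = x then 1 else 0)) else 0)
      + (if kelSet G y x a then ((if b = y then (1:ℝ) else 0) - (if b = x then 1 else 0)) else 0) := by
  classical
  have hab : ∀ (H : SimpleGraph V) (c d : V), adjMat H c d = if H.Adj c d then (1:ℝ) else 0 := by
    intro H c d; simp [adjMat]
  rw [hab, hab]
  clear hab
  by_cases hax : a = x <;> by_cases hay : a = y <;>
    by_cases hbx : b = x <;> by_cases hby : b = y <;>
    by_cases hG : G.Adj a b <;>
    by_cases hyb : G.Adj y b <;> by_cases hxb : G.Adj x b <;>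
    by_cases hya : G.Adj y a <;> by_cases hxa : G.Adj x a <;>
    simp_all [kelmans, kelSet, Equiv.swap_apply_def] <;>
    first
      | exact hxa hG.symm
      | exact hG hya.symm
      | exact fun h => hya h.symm
      | exact fun h => hxa h.symm
      | exact fun h => hG h.symm
      | exact fun h => hby h.symm
      | exact fun h => hbx h.symm
      | exact fun h => hax h.symm
      | exact fun h => hay h.symm
      | exact hyb.ne
      | exact hxb.ne
      | exact hG.symm
      | exact hya.symm
      | exact hxa.symm
      | (exfalso;
         first
           | exact hG hxa.symm
           | exact hG hya.symm
           | exact hya hG.symm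
           | exact hxb hyb.symm
           | exact hyb hxb.symm
           | exact hG hxb.symm
           | exact hG hyb.symm
           | exact hxb hG.symm
           | exact hyb hG.symm
           | exact hxa hG.symm)

end kelmansAux

open Matrix in
/-- The Kelmans transformation does not decrease the adjacency spectral radius. -/
theorem kelmans_specRad {V : Type*} [Fintype V] [DecidableEq V]
    (G : SimpleGraph V) (x y : V) :
    specRad G ≤ specRad (kelmans G x y) := by
  classical
  cases isEmpty_or_nonempty V with
  | inl h =>
      have hz : ∀ (H : SimpleGraph V), specRad H = 0 := by
        intro H; rw [specRad, iSup_of_empty', Real.sSup_empty]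
      rw [hz, hz]
  | inr h =>
      set A := adjMat G with hAdef
      have hA := adjMat_isHermitian G
      set K := adjMat (kelmans G x y) with hKdef
      have hK := adjMat_isHermitian (kelmans G x y)
      obtain ⟨i₀, hi₀⟩ := exists_eq_ciSup_of_finite (f := hA.eigenvalues)
      have hi₀' : hA.eigenvalues i₀ = specRad G := hi₀
      set z : V → ℝ := ⇑(hA.eigenvectorBasis i₀) with hzdef
      have hzeig : A *ᵥ z = specRad G • z := by
        rw [← hi₀']; exact hA.mulVec_eigenvectorBasis i₀
      set u : V → ℝ := fun i => |z i| with hudef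
      have hu : ∀ i, 0 ≤ u i := fun i => abs_nonneg _
      have hzz : dotProduct z z = 1 := by
        have hnorm : ‖hA.eigenvectorBasis i₀‖ = 1 := hA.eigenvectorBasis.orthonormal.1 i₀
        have : (inner ℝ (hA.eigenvectorBasis i₀) (hA.eigenvectorBasis i₀) : ℝ)
            = dotProduct z z := by
          rw [PiLp.inner_apply]
          simp [dotProduct, hzdef, sq]
        rw [← this, real_inner_self_eq_norm_mul_norm, hnorm, one_mul]
      have huu : dotProduct u u = 1 := by
        rw [← hzz]
        simp [dotProduct, hudef, abs_mul_abs_self]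
      have hAz : dotProduct z (A *ᵥ z) = specRad G := by
        rw [hzeig, dotProduct_smul, hzz, smul_eq_mul, mul_one]
      have hAnn : ∀ a b, 0 ≤ A a b := by
        intro a b
        rw [hAdef, show adjMat G a b = if G.Adj a b then (1:ℝ) else 0 from by simp [adjMat]]
        split <;> norm_num
      have hAu : specRad G ≤ dotProduct u (A *ᵥ u) := by
        rw [← hAz]
        simp only [dotProduct, Matrix.mulVec, Finset.mul_sum]
        apply Finset.sum_le_sum
        intro a _
        apply Finset.sum_le_sum
        intro b _
        calc z a * (A a b * z b) ≤ |z a * (A a b * z b)| := le_abs_self _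
          _ = u a * (A a b * u b) := by
              rw [abs_mul, abs_mul, abs_of_nonneg (hAnn a b), hudef]; try ring
      have hKvalid : specRad (kelmans G x y) = ⨆ i, hK.eigenvalues i := rfl
      rcases le_total (u y) (u x) with hcase | hcase
      · have key : dotProduct u (A *ᵥ u) ≤ dotProduct u (K *ᵥ u) := by
          refine quad_mono A K u hu (kelSet G x y) x y hcase ?_
          intro a b
          exact kelmans_entry G x y a b
        have upper := rayleigh_le_s7 K hK u
        rw [huu, mul_one] at upper
        rw [hKvalid]
        linarith
      · set σ := Equiv.swap x y with hσ
        set w : V → ℝ := fun i => u (σ i) with hwdef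
        have hww : dotProduct w w = 1 := by
          rw [← huu]
          exact Equiv.sum_comp σ (fun i => u i * u i)
        have hswap : dotProduct w (K *ᵥ w)
            = dotProduct u ((K.submatrix σ σ) *ᵥ u) := by
          simp only [dotProduct, Matrix.mulVec, hwdef, Matrix.submatrix_apply]
          apply Fintype.sum_equiv σ
          intro a
          simp only [hσ, Equiv.swap_apply_self]
          congr 1
          apply Fintype.sum_equiv σ
          intro b
          simp only [hσ, Equiv.swap_apply_self]
        have key : dotProduct u (A *ᵥ u)
            ≤ dotProduct u ((K.submatrix σ σ) *ᵥ u) := by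
          refine quad_mono A (K.submatrix σ σ) u hu (kelSet G y x) y x hcase ?_
          intro a b
          rw [Matrix.submatrix_apply]
          exact kelmans_entry_swap G x y a b
        have upper := rayleigh_le_s7 K hK w
        rw [hww, mul_one] at upper
        rw [hKvalid]
        rw [hswap] at upper
        linarith
end

section
/- Let G be a graph on vertex set {1,...,n} such that for all vertices x < y and any z ≠ x, y, whenever xz is not an edge of G, yz is also not an edge of G (i.e., G is a threshold/shifted graph with respect to the ordering). Suppose some edge e_j = {j, n+2−j} with 3 ≤ j ≤ ⌈n/2⌉ is absent from G. Then e(G) ≤ (n choose 2) − (n+2−2j)(j−1) − (j−1 choose 2). -/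
open SimpleGraph

/-- Edge bound for shifted graphs missing the edge `{j, n+2-j}` (vertices `1,…,n`
are represented by `0,…,n-1` in `Fin n`, so this is the pair `(j-1, n+1-j)`). -/
theorem shifted_missing_edge_bound {n j : ℕ} (G : SimpleGraph (Fin n))
    (hshift : ∀ x y z : Fin n, x < y → z ≠ x → z ≠ y → ¬ G.Adj x z → ¬ G.Adj y z)
    (h3 : 3 ≤ j) (hj : j ≤ (n + 1) / 2)
    (habs : ¬ G.Adj ⟨j - 1, by omega⟩ ⟨n + 1 - j, by omega⟩) :
    (G.edgeSet.ncard : ℤ) ≤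
      (n.choose 2 : ℤ) - ((n : ℤ) + 2 - 2 * j) * ((j : ℤ) - 1) - ((j - 1).choose 2 : ℤ) := by
  
  classical
  -- basic arithmetic facts
  have h2j : 2 * j ≤ n + 1 := by omega
  have hn5 : 5 ≤ n := by omega
  set a : Fin n := ⟨j - 1, by omega⟩ with ha
  set b : Fin n := ⟨n + 1 - j, by omega⟩ with hb
  have haval : a.val = j - 1 := rfl
  have hbval : b.val = n + 1 - j := rfl
  -- the key lemma: no edges between [a, n) and [b, n)
  have key : ∀ u v : Fin n, j - 1 ≤ u.val → n + 1 - j ≤ v.val → u ≠ v → ¬ G.Adj u v := by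
    have step1 : ∀ v : Fin n, n + 1 - j ≤ v.val → ¬ G.Adj a v := by
      intro v hv
      by_cases hvb : v = b
      · rw [hvb]; exact habs
      · have hlt : b < v := by
          rw [Fin.lt_def]
          have := Fin.val_ne_of_ne hvb
          omega
        have hab : a ≠ b := by
          intro h; have := congrArg Fin.val h; simp [ha, hb] at this; omega
        have hav : a ≠ v := by
          intro h; have := congrArg Fin.val h
          have hbv : b.val < v.val := hlt
          simp only [ha] at this; omega
        intro hGav
        exact hshift b v a hlt hab hav (fun h => habs h.symm) hGav.symm
    intro u v hu hv huv
    by_cases hua : u = a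
    · rw [hua]; exact step1 v hv
    · have hlt : a < u := by
        rw [Fin.lt_def]
        have := Fin.val_ne_of_ne hua
        simp only [ha]
        omega
      have hva : v ≠ a := by
        intro h; have := congrArg Fin.val h; simp only [hb, ha] at this; omega
      exact hshift a u v hlt hva (Ne.symm huv) (step1 v hv)
  -- the finsets
  set A : Finset (Fin n) :=
    Finset.univ.filter (fun x : Fin n => j - 1 ≤ x.val ∧ x.val < n + 1 - j) with hA
  set B : Finset (Fin n) := Finset.univ.filter (fun x : Fin n => n + 1 - j ≤ x.val) with hB
  have memA : ∀ x : Fin n, x ∈ A ↔ j - 1 ≤ x.val ∧ x.val < n + 1 - j := by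
    intro x
    rw [hA, Finset.mem_filter]
    simp only [Finset.mem_univ, true_and]
  have memB : ∀ x : Fin n, x ∈ B ↔ n + 1 - j ≤ x.val := by
    intro x
    rw [hB, Finset.mem_filter]
    simp only [Finset.mem_univ, true_and]
  have cardA : A.card = n + 2 - 2 * j := by
    have himg : A.image Fin.val = Finset.Ico (j - 1) (n + 1 - j) := by
      ext m
      simp only [Finset.mem_image, Finset.mem_Ico]
      constructor
      · rintro ⟨x, hx, rfl⟩; exact (memA x).mp hx
      · intro hm; exact ⟨⟨m, by omega⟩, (memA _).mpr (by simpa using hm), rfl⟩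
    have := Finset.card_image_of_injective A Fin.val_injective
    rw [himg, Nat.card_Ico] at this
    omega
  have cardB : B.card = j - 1 := by
    have himg : B.image Fin.val = Finset.Ico (n + 1 - j) n := by
      ext m
      simp only [Finset.mem_image, Finset.mem_Ico]
      constructor
      · rintro ⟨x, hx, rfl⟩; exact ⟨(memB x).mp hx, x.isLt⟩
      · intro hm; exact ⟨⟨m, hm.2⟩, (memB _).mpr hm.1, rfl⟩
    have := Finset.card_image_of_injective B Fin.val_injective
    rw [himg, Nat.card_Ico] at this
    omega
  set M1 : Finset (Sym2 (Fin n)) := (A ×ˢ B).image (fun p => s(p.1, p.2)) with hM1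
  set M2 : Finset (Sym2 (Fin n)) := B.offDiag.image Sym2.mk.uncurry with hM2
  have cardM1 : M1.card = (n + 2 - 2 * j) * (j - 1) := by
    rw [hM1, Finset.card_image_of_injOn, Finset.card_product, cardA, cardB]
    rintro ⟨u₁, v₁⟩ h1 ⟨u₂, v₂⟩ h2 heq
    simp only [Finset.mem_coe, Finset.mem_product] at h1 h2
    have heq' : s(u₁, v₁) = s(u₂, v₂) := heq
    rw [Sym2.eq_iff] at heq'
    rcases heq' with ⟨rfl, rfl⟩ | ⟨rfl, rfl⟩
    · rfl
    · exfalso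
      have hu := (memA _).mp h1.1
      have hv := (memB _).mp h2.2
      omega
  have cardM2 : M2.card = (j - 1).choose 2 := by
    rw [hM2, Sym2.card_image_offDiag, cardB]
  have hdisj : Disjoint M1 M2 := by
    rw [Finset.disjoint_left]
    intro e he1 he2
    rw [hM1, Finset.mem_image] at he1
    rw [hM2, Finset.mem_image] at he2
    obtain ⟨⟨u, v⟩, huv, rfl⟩ := he1
    obtain ⟨⟨x, y⟩, hxy, hexy⟩ := he2
    simp only [Finset.mem_product] at huv
    simp only [Finset.mem_offDiag] at hxy
    have hu := (memA u).mp huv.1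
    simp only [Function.uncurry_apply_pair, Sym2.eq, Sym2.rel_iff', Prod.mk.injEq, Prod.swap_prod_mk] at hexy
    rcases hexy with ⟨rfl, rfl⟩ | ⟨rfl, rfl⟩
    · have := (memB x).mp hxy.1; omega
    · have := (memB y).mp hxy.2.1; omega
  have hMsub : M1 ∪ M2 ⊆ (⊤ : SimpleGraph (Fin n)).edgeFinset := by
    intro e he
    rw [Finset.mem_union] at he
    rw [SimpleGraph.mem_edgeFinset]
    rcases he with he | he
    · rw [hM1, Finset.mem_image] at he
      obtain ⟨⟨u, v⟩, huv, rfl⟩ := he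
      simp only [Finset.mem_product] at huv
      have hu := (memA u).mp huv.1
      have hv := (memB v).mp huv.2
      simp only [SimpleGraph.mem_edgeSet, SimpleGraph.top_adj]
      intro h; have := congrArg Fin.val h; omega
    · rw [hM2, Finset.mem_image] at he
      obtain ⟨⟨x, y⟩, hxy, rfl⟩ := he
      simp only [Finset.mem_offDiag] at hxy
      simp only [Function.uncurry_apply_pair, SimpleGraph.mem_edgeSet, SimpleGraph.top_adj]
      exact hxy.2.2
  have hEsub : G.edgeFinset ⊆ (⊤ : SimpleGraph (Fin n)).edgeFinset \ (M1 ∪ M2) := by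
    intro e he
    rw [SimpleGraph.mem_edgeFinset] at he
    rw [Finset.mem_sdiff]
    refine ⟨?_, ?_⟩
    · rw [SimpleGraph.mem_edgeFinset]
      exact SimpleGraph.edgeSet_mono le_top he
    · rw [Finset.mem_union]
      rintro (hmem | hmem)
      · rw [hM1, Finset.mem_image] at hmem
        obtain ⟨⟨u, v⟩, huv, hev⟩ := hmem
        simp only [Finset.mem_product] at huv
        have hu := (memA u).mp huv.1
        have hv := (memB v).mp huv.2
        have hadj : G.Adj u v := by
          rw [← hev, SimpleGraph.mem_edgeSet] at he; exact he
        exact key u v hu.1 hv (fun h => by have := congrArg Fin.val h; omega) hadj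
      · rw [hM2, Finset.mem_image] at hmem
        obtain ⟨⟨x, y⟩, hxy, hev⟩ := hmem
        simp only [Finset.mem_offDiag] at hxy
        have hx := (memB x).mp hxy.1
        have hy := (memB y).mp hxy.2.1
        have hadj : G.Adj x y := by
          rw [← hev, Function.uncurry_apply_pair, SimpleGraph.mem_edgeSet] at he; exact he
        exact key x y (by omega) hy hxy.2.2 hadj
  -- counting
  have hcount : G.edgeFinset.card + ((n + 2 - 2 * j) * (j - 1) + (j - 1).choose 2)
      ≤ n.choose 2 := by
    have h1 : G.edgeFinset.card ≤
        ((⊤ : SimpleGraph (Fin n)).edgeFinset \ (M1 ∪ M2)).card :=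
      Finset.card_le_card hEsub
    rw [Finset.card_sdiff_of_subset hMsub] at h1
    have h2 : (M1 ∪ M2).card = (n + 2 - 2 * j) * (j - 1) + (j - 1).choose 2 := by
      rw [Finset.card_union_of_disjoint hdisj, cardM1, cardM2]
    have h3 : (⊤ : SimpleGraph (Fin n)).edgeFinset.card = n.choose 2 := by
      rw [SimpleGraph.card_edgeFinset_top_eq_card_choose_two, Fintype.card_fin]
    have h4 : (M1 ∪ M2).card ≤ (⊤ : SimpleGraph (Fin n)).edgeFinset.card :=
      Finset.card_le_card hMsub
    omega
  -- conclude
  have hncard : G.edgeSet.ncard = G.edgeFinset.card := by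
    rw [← SimpleGraph.coe_edgeFinset, Set.ncard_coe_finset]
  rw [hncard]
  have hcast : (((n + 2 - 2 * j) * (j - 1) : ℕ) : ℤ)
      = ((n : ℤ) + 2 - 2 * j) * ((j : ℤ) - 1) := by
    rw [Nat.cast_mul, Nat.cast_sub (by omega : 2 * j ≤ n + 2),
      Nat.cast_sub (by omega : 1 ≤ j)]
    push_cast
    ring
  have hcount' : (G.edgeFinset.card : ℤ) + ((((n + 2 - 2 * j) * (j - 1) : ℕ) : ℤ)
      + (((j - 1).choose 2 : ℕ) : ℤ)) ≤ (n.choose 2 : ℤ) := by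
    exact_mod_cast hcount
  rw [hcast] at hcount'
  linarith
end

section
/- Let n ≥ 4 and let G be a shifted graph on vertex set {1,...,n} (i.e., for x < y, N(y)\{x} ⊆ N(x)\{y}) with e(G) > (n-1 choose 2) + 1. Then for every j with 3 ≤ j ≤ ⌈n/2⌉, the pair {j, n+2−j} is an edge of G, and for every k with 1 ≤ k ≤ ⌊n/2⌋, the pair {k, n+1−k} is an edge of G. -/
open SimpleGraph

-- monotonicity of non-adjacency in shifted graphs

-- monotonicity of non-adjacency in shifted graphs
lemma nonadj_up {n : ℕ} (G : SimpleGraph (Fin n))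
    (hshift : ∀ x y z : Fin n, x < y → z ≠ x → z ≠ y → ¬ G.Adj x z → ¬ G.Adj y z)
    (a b c d : Fin n) (hab : a < b) (hac : a ≤ c) (hbd : b ≤ d) (hcd : c ≠ d)
    (hne : ¬ G.Adj a b) : ¬ G.Adj c d := by
  have had : ¬ G.Adj a d := by
    rcases eq_or_lt_of_le hbd with rfl | hlt
    · exact hne
    · intro hadj
      exact hshift b d a hlt (ne_of_lt hab) (ne_of_lt (lt_of_lt_of_le hab hbd))
        (fun h => hne h.symm) hadj.symm
  rcases eq_or_lt_of_le hac with rfl | hlt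
  · exact had
  · exact hshift a c d hlt (ne_of_gt (lt_of_lt_of_le hab hbd)) (Ne.symm hcd) had

lemma count_bound {n : ℕ} (G : SimpleGraph (Fin n)) (T : Finset (Sym2 (Fin n)))
    (hT : ∀ e ∈ T, e ∉ G.edgeSet ∧ ¬ e.IsDiag) (hcard : n - 2 ≤ T.card) :
    G.edgeSet.ncard + (n - 2) ≤ n.choose 2 := by
  classical
  have hsub : G.edgeSet ∪ ↑T ⊆ (⊤ : SimpleGraph (Fin n)).edgeSet := by
    rw [SimpleGraph.edgeSet_top]
    rintro e (he | he)
    · exact fun hd => (G.not_isDiag_of_mem_edgeSet he) hd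
    · exact (hT e he).2
  have hdisj : Disjoint G.edgeSet (↑T : Set (Sym2 (Fin n))) := by
    rw [Set.disjoint_right]
    intro e he
    exact (hT e he).1
  have h1 : (G.edgeSet ∪ ↑T).ncard = G.edgeSet.ncard + T.card := by
    rw [Set.ncard_union_eq hdisj (Set.toFinite _) (Set.toFinite _), Set.ncard_coe_finset]
  have h2 : (G.edgeSet ∪ ↑T).ncard ≤ ((⊤ : SimpleGraph (Fin n)).edgeSet).ncard :=
    Set.ncard_le_ncard hsub (Set.toFinite _)
  have h3 : ((⊤ : SimpleGraph (Fin n)).edgeSet).ncard = n.choose 2 := by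
    rw [Set.ncard_eq_toFinset_card']
    have := SimpleGraph.card_edgeFinset_top_eq_card_choose_two (V := Fin n)
    simpa [SimpleGraph.edgeFinset] using this
  omega

set_option maxHeartbeats 1000000 in
lemma shifted_bound {n : ℕ} (hn : 4 ≤ n) (G : SimpleGraph (Fin n))
    (hshift : ∀ x y z : Fin n, x < y → z ≠ x → z ≠ y → ¬ G.Adj x z → ¬ G.Adj y z)
    (a b : ℕ) (hab : a < b) (hb : b < n)
    (hne : ¬ G.Adj ⟨a, by omega⟩ ⟨b, hb⟩)
    (hcount : n - 2 ≤ (n - 1 - a) + (if b + 2 ≤ n then n - 2 - a else 0)) :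
    G.edgeSet.ncard + (n - 2) ≤ n.choose 2 := by
  have hmono : ∀ c d : Fin n, a ≤ c.val → b ≤ d.val → c ≠ d → ¬ G.Adj c d := by
    intro c d hc hd hcd
    exact nonadj_up G hshift ⟨a, by omega⟩ ⟨b, hb⟩ c d
      (by simpa [Fin.lt_def] using hab) (by simpa [Fin.le_def] using hc)
      (by simpa [Fin.le_def] using hd) hcd hne
  set v1 : Fin n := ⟨n - 1, by omega⟩ with hv1
  set v2 : Fin n := ⟨n - 2, by omega⟩ with hv2
  set T1 : Finset (Sym2 (Fin n)) :=
    (Finset.Icc (⟨a, by omega⟩ : Fin n) ⟨n - 2, by omega⟩).image (fun c => s(c, v1)) with hT1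
  have hmemT1 : ∀ e ∈ T1, ∃ c : Fin n, a ≤ c.val ∧ c.val ≤ n - 2 ∧ e = s(c, v1) := by
    intro e he
    rw [hT1, Finset.mem_image] at he
    obtain ⟨c, hc, rfl⟩ := he
    rw [Finset.mem_Icc] at hc
    exact ⟨c, hc.1, hc.2, rfl⟩
  have hgood1 : ∀ e ∈ T1, e ∉ G.edgeSet ∧ ¬ e.IsDiag := by
    intro e he
    obtain ⟨c, hc1, hc2, rfl⟩ := hmemT1 e he
    have hcd : c ≠ v1 := by
      intro h; rw [h, hv1] at hc2; simp at hc2; omega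
    refine ⟨?_, by simp [Sym2.isDiag_iff_proj_eq, hcd]⟩
    rw [SimpleGraph.mem_edgeSet]
    exact hmono c v1 hc1 (by simp [hv1]; omega) hcd
  have hcard1 : T1.card = n - 1 - a := by
    have hinj : Set.InjOn (fun c => s(c, v1))
        ↑(Finset.Icc (⟨a, by omega⟩ : Fin n) ⟨n - 2, by omega⟩) := by
      intro c hc c' hc' h
      simp only [Finset.coe_Icc, Set.mem_Icc] at hc hc'
      rcases Sym2.eq_iff.mp h with ⟨h1, -⟩ | ⟨h1, h2⟩
      · exact h1
      · exfalso
        have h2 := hc.2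
        rw [h1, hv1, Fin.le_def] at h2
        simp at h2
        omega
    rw [hT1, Finset.card_image_of_injOn hinj, Fin.card_Icc]
    simp
    omega
  rcases Nat.lt_or_ge n (b + 2) with hcase | hcase
  · rw [if_neg (by omega)] at hcount
    have := count_bound G T1 hgood1 (by omega)
    exact this
  · rw [if_pos hcase] at hcount
    obtain ⟨T2, hT2⟩ : ∃ T2 : Finset (Sym2 (Fin n)),
        T2 = (Finset.Icc (⟨a, by omega⟩ : Fin n) ⟨n - 3, by omega⟩).image (fun c => s(c, v2)) :=
      ⟨_, rfl⟩
    have hmemT2 : ∀ e ∈ T2, ∃ c : Fin n, a ≤ c.val ∧ c.val ≤ n - 3 ∧ e = s(c, v2) := by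
      intro e he
      rw [hT2, Finset.mem_image] at he
      obtain ⟨c, hc, rfl⟩ := he
      rw [Finset.mem_Icc] at hc
      exact ⟨c, hc.1, hc.2, rfl⟩
    have hgood : ∀ e ∈ T1 ∪ T2, e ∉ G.edgeSet ∧ ¬ e.IsDiag := by
      intro e he
      rw [Finset.mem_union] at he
      rcases he with he | he
      · exact hgood1 e he
      · obtain ⟨c, hc1, hc2, rfl⟩ := hmemT2 e he
        have hcd : c ≠ v2 := by
          intro h; rw [h, hv2] at hc2; simp at hc2; omega
        refine ⟨?_, by simp [Sym2.isDiag_iff_proj_eq, hcd]⟩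
        rw [SimpleGraph.mem_edgeSet]
        exact hmono c v2 hc1 (by simp [hv2]; omega) hcd
    have hcard2 : T2.card = n - 2 - a := by
      have hinj : Set.InjOn (fun c => s(c, v2))
          ↑(Finset.Icc (⟨a, by omega⟩ : Fin n) ⟨n - 3, by omega⟩) := by
        intro c hc c' hc' h
        simp only [Finset.coe_Icc, Set.mem_Icc] at hc hc'
        rcases Sym2.eq_iff.mp h with ⟨h1, -⟩ | ⟨h1, h2⟩
        · exact h1
        · exfalso
          have h2 := hc.2
          rw [h1, hv2, Fin.le_def] at h2
          simp at h2
          omega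
      rw [hT2, Finset.card_image_of_injOn hinj, Fin.card_Icc]
      simp; omega
    have hdisj : Disjoint T1 T2 := by
      rw [Finset.disjoint_left]
      intro e he1 he2
      obtain ⟨c, hc1, hc2, rfl⟩ := hmemT1 e he1
      obtain ⟨c', hc1', hc2', heq⟩ := hmemT2 _ he2
      rcases Sym2.eq_iff.mp heq with ⟨-, h2⟩ | ⟨-, h2⟩
      · rw [hv1, hv2] at h2; simp at h2; omega
      · rw [← h2, hv1] at hc2'; simp at hc2'; omega
    have hcardU : n - 2 ≤ (T1 ∪ T2).card := by
      rw [Finset.card_union_of_disjoint hdisj, hcard1, hcard2]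
      exact hcount
    exact count_bound G (T1 ∪ T2) hgood hcardU

/-- In a shifted graph on `{1,…,n}` (as `Fin n`, vertex `i` represented by `i-1`)
with more than `(n-1 choose 2) + 1` edges, all edges `{j, n+2-j}` for
`3 ≤ j ≤ ⌈n/2⌉` and `{k, n+1-k}` for `1 ≤ k ≤ ⌊n/2⌋` are present. -/
theorem shifted_edges_present {n : ℕ} (hn : 4 ≤ n) (G : SimpleGraph (Fin n))
    (hshift : ∀ x y z : Fin n, x < y → z ≠ x → z ≠ y → ¬ G.Adj x z → ¬ G.Adj y z)
    (h : (n - 1).choose 2 + 1 < G.edgeSet.ncard) :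
    (∀ j, (h3 : 3 ≤ j) → (hj : j ≤ (n + 1) / 2) →
      G.Adj ⟨j - 1, by omega⟩ ⟨n + 1 - j, by omega⟩) ∧
    (∀ k, (h1 : 1 ≤ k) → (hk : k ≤ n / 2) →
      G.Adj ⟨k - 1, by omega⟩ ⟨n - k, by omega⟩) := by
  have hch : n.choose 2 = (n - 1).choose 2 + (n - 1) := by
    obtain ⟨m, rfl⟩ : ∃ m, n = m + 1 := ⟨n - 1, by omega⟩
    simp [Nat.choose_succ_succ, Nat.choose_one_right]
    omega
  constructor
  · intro j h3 hj
    by_contra hne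
    have hb : n + 1 - j < n := by omega
    have := shifted_bound hn G hshift (j - 1) (n + 1 - j) (by omega) hb hne
      (by rw [if_pos (by omega)]; omega)
    omega
  · intro k h1 hk
    by_contra hne
    have hb : n - k < n := by omega
    have := shifted_bound hn G hshift (k - 1) (n - k) (by omega) hb hne
      (by split_ifs with hc <;> omega)
    omega
end

section
/- Let n ≥ 4 and suppose G_1, ..., G_n are graphs on the same vertex set of size n, each isomorphic to K_1 ∨ (K_{n-2} ∪ K_1). Then the family {G_1, ..., G_n} admits a rainbow Hamiltonian cycle unless G_1 = G_2 = ... = G_n (as labeled graphs). -/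
open SimpleGraph

set_option linter.deprecated false in
theorem List.chain_iff_get {α : Type*} {R : α → α → Prop} {a : α} {l : List α} :
    List.Chain R a l ↔
    (∀ h : 0 < List.length l, R a (List.get l ⟨0, h⟩)) ∧
      ∀ (i : ℕ) (h : i < List.length l - 1),
        R (List.get l ⟨i, by omega⟩) (List.get l ⟨i + 1, by omega⟩) := by
  show List.IsChain R (a :: l) ↔ _
  rw [List.isChain_iff_getElem]
  constructor
  · intro H
    refine ⟨fun h => ?_, fun i h => ?_⟩
    · simpa using H 0 (by simp; omega)
    · exact H (i + 1) (by simp; omega)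
  · rintro ⟨H0, H⟩ i hi
    cases i with
    | zero => simpa using H0 (by simp at hi; omega)
    | succ i => simpa using H i (by simp at hi; omega)

namespace RainbowAux

open List

variable {V : Type*} {G : SimpleGraph V}

def walkFrom (G : SimpleGraph V) : (a : V) → (l : List V) → (b : V) →
    List.Chain G.Adj a (l ++ [b]) → G.Walk a b
  | _, [], _, h => Walk.cons ((List.chain_cons.mp h).1) Walk.nil
  | _, c :: l, b, h =>
      Walk.cons ((List.chain_cons.mp h).1)
        (walkFrom G c l b (show List.Chain G.Adj c (l ++ [b]) from (List.chain_cons.mp h).2))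

lemma support_walkFrom : ∀ (a : V) (l : List V) (b : V) (h),
    (walkFrom G a l b h).support = a :: (l ++ [b])
  | a, [], b, h => by simp [walkFrom]
  | a, c :: l, b, h => by
      simp [walkFrom, support_walkFrom c l b]

lemma edges_walkFrom : ∀ (a : V) (l : List V) (b : V) (h),
    (walkFrom G a l b h).edges = List.zipWith (fun x y => s(x, y)) (a :: l) (l ++ [b])
  | a, [], b, h => by simp [walkFrom]
  | a, c :: l, b, h => by
      simp [walkFrom, edges_walkFrom c l b]

lemma not_mem_edges_aux (a₀ c₀ : V) : ∀ (l : List V) (c b : V) (h),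
    c₀ ∉ c :: l → a₀ ∉ c :: l → s(a₀, c₀) ∉ (walkFrom G c l b h).edges
  | [], c, b, h, hc, ha => by
      simp only [walkFrom, Walk.edges_cons, Walk.edges_nil, List.mem_singleton]
      intro he
      rw [Sym2.eq_iff] at he
      rcases he with ⟨h1, _⟩ | ⟨_, h2⟩
      · exact ha (h1 ▸ List.mem_cons_self)
      · exact hc (h2 ▸ List.mem_cons_self)
  | d :: l, c, b, h, hc, ha => by
      simp only [walkFrom, Walk.edges_cons, List.mem_cons]
      rintro (he | he)
      · rw [Sym2.eq_iff] at he
        rcases he with ⟨h1, _⟩ | ⟨h1, h2⟩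
        · exact ha (h1 ▸ List.mem_cons_self)
        · exact hc (h2 ▸ List.mem_cons_self)
      · exact not_mem_edges_aux a₀ c₀ l d b _
          (fun hm => hc (List.mem_cons_of_mem _ hm))
          (fun hm => ha (List.mem_cons_of_mem _ hm)) he

lemma isCycle_walkFrom (a : V) (l : List V) (h) (hnd : (a :: l).Nodup)
    (hlen : 2 ≤ l.length) : (walkFrom G a l a h).IsCycle := by
  match l, h with
  | c :: l', h =>
    simp only [walkFrom]
    rw [Walk.cons_isCycle_iff]
    constructor
    · apply Walk.IsPath.mk'
      rw [support_walkFrom]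
      have h1 : (a :: c :: l').Nodup := hnd
      simp only [List.nodup_cons, List.mem_cons] at h1
      have : (c :: (l' ++ [a])).Nodup := by
        simp only [List.nodup_cons, List.mem_append, List.mem_singleton]
        refine ⟨?_, ?_⟩
        · rintro (hm | rfl)
          · exact h1.2.1 hm
          · exact h1.1 (Or.inl rfl)
        · rw [List.nodup_append]
          refine ⟨h1.2.2, List.nodup_singleton a, ?_⟩
          intro x hx
          simp only [List.mem_singleton]
          rintro _ rfl rfl
          exact h1.1 (Or.inr hx)
      exact this
    · match l', h with
      | d :: l'', h =>
        simp only [walkFrom, Walk.edges_cons, List.mem_cons]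
        have h1 : (a :: c :: d :: l'').Nodup := hnd
        simp only [List.nodup_cons, List.mem_cons] at h1
        rintro (he | he)
        · rw [Sym2.eq_iff] at he
          rcases he with ⟨h2, h3⟩ | ⟨h2, _⟩
          · exact h1.1 (Or.inl h2)
          · exact h1.1 (Or.inr (Or.inl h2))
        · refine not_mem_edges_aux a c l'' d a _ ?_ ?_ he
          · simp only [List.mem_cons]
            rintro (rfl | hm)
            · exact h1.2.1 (Or.inl rfl)
            · exact h1.2.1 (Or.inr hm)
          · simp only [List.mem_cons]
            rintro (rfl | hm)
            · exact h1.1 (Or.inr (Or.inl rfl))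
            · exact h1.1 (Or.inr (Or.inr hm))

lemma finv1 {m : ℕ} : ((1 : Fin (m + 3)) : ℕ) = 1 := by
  rw [Fin.val_one']
  exact Nat.mod_eq_of_lt (by omega)

lemma finv2 {m : ℕ} : ((2 : Fin (m + 3)) : ℕ) = 2 := by
  rw [Fin.coe_ofNat_eq_mod]
  exact Nat.mod_eq_of_lt (by omega)

lemma finv3 {m : ℕ} (hm : 1 ≤ m) : ((3 : Fin (m + 3)) : ℕ) = 3 := by
  rw [Fin.coe_ofNat_eq_mod]
  exact Nat.mod_eq_of_lt (by omega)

lemma fin10 {m : ℕ} : (1 : Fin (m + 3)) ≠ 0 := by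
  intro hcon
  have := congrArg Fin.val hcon
  rw [finv1] at this
  simp at this

lemma fin20 {m : ℕ} : (2 : Fin (m + 3)) ≠ 0 := by
  intro hcon
  have := congrArg Fin.val hcon
  rw [finv2] at this
  simp at this

lemma fin30 {m : ℕ} (hm : 1 ≤ m) : (3 : Fin (m + 3)) ≠ 0 := by
  intro hcon
  have := congrArg Fin.val hcon
  rw [finv3 hm] at this
  simp at this

lemma fin01 {m : ℕ} : (0 : Fin (m + 3)) ≠ 1 := fun h => fin10 h.symm

lemma fin02 {m : ℕ} : (0 : Fin (m + 3)) ≠ 2 := fun h => fin20 h.symm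

lemma fin12 {m : ℕ} : (1 : Fin (m + 3)) ≠ 2 := by
  intro hcon
  have := congrArg Fin.val hcon
  rw [finv1, finv2] at this
  simp at this

lemma fin0last {m : ℕ} : (0 : Fin (m + 3)) ≠ -1 := by
  intro hcon
  have h1 := congrArg (· + 1) hcon
  simp only [zero_add, neg_add_cancel] at h1
  exact fin10 h1

lemma fin1last {m : ℕ} : (1 : Fin (m + 3)) ≠ -1 := by
  intro hcon
  have h1 := congrArg (· + 1) hcon
  simp only [neg_add_cancel, one_add_one_eq_two] at h1
  exact fin20 h1

lemma fin2last {m : ℕ} (hm : 1 ≤ m) : (2 : Fin (m + 3)) ≠ -1 := by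
  intro hcon
  have h1 := congrArg (· + 1) hcon
  simp only [neg_add_cancel, two_add_one_eq_three] at h1
  exact fin30 hm h1

lemma fin_tsucc {m : ℕ} {t : Fin (m + 3)} (h : t + 1 = 0) : t = -1 :=
  eq_neg_of_add_eq_zero_left h

lemma fin_tne {m : ℕ} (t : Fin (m + 3)) : t ≠ t + 1 := by
  intro hcon
  have := left_eq_add.mp hcon
  exact fin10 this

lemma exists_perm2 {α : Type*} [DecidableEq α] {x y a b : α} (hxy : x ≠ y) (hab : a ≠ b) :
    ∃ π : Equiv.Perm α, π x = a ∧ π y = b := by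
  set s1 := Equiv.swap x a with hs1
  have hy' : s1 y ≠ a := by
    intro hcon
    exact hxy (s1.injective (hcon.trans (Equiv.swap_apply_left x a).symm)).symm
  refine ⟨s1.trans (Equiv.swap (s1 y) b), ?_, ?_⟩
  · rw [Equiv.trans_apply, hs1, Equiv.swap_apply_left]
    exact Equiv.swap_apply_of_ne_of_ne hy'.symm hab
  · rw [Equiv.trans_apply, Equiv.swap_apply_left]

lemma exists_perm3 {α : Type*} [DecidableEq α] {x y z a b c : α}
    (hxy : x ≠ y) (hxz : x ≠ z) (hyz : y ≠ z)
    (hab : a ≠ b) (hac : a ≠ c) (hbc : b ≠ c) :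
    ∃ π : Equiv.Perm α, π x = a ∧ π y = b ∧ π z = c := by
  set s1 := Equiv.swap x a with hs1
  have h1x : s1 x = a := Equiv.swap_apply_left x a
  have hy1 : s1 y ≠ a := fun hcon => hxy (s1.injective (hcon.trans h1x.symm)).symm
  have hz1 : s1 z ≠ a := fun hcon => hxz (s1.injective (hcon.trans h1x.symm)).symm
  have hyz1 : s1 y ≠ s1 z := fun hcon => hyz (s1.injective hcon)
  set s2 := Equiv.swap (s1 y) b with hs2
  have h2y : s2 (s1 y) = b := Equiv.swap_apply_left _ _
  have h2a : s2 a = a := Equiv.swap_apply_of_ne_of_ne hy1.symm hab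
  have hz2a : s2 (s1 z) ≠ a := fun hcon => hz1 (s2.injective (hcon.trans h2a.symm))
  have hz2b : s2 (s1 z) ≠ b := fun hcon => hyz1 (s2.injective (hcon.trans h2y.symm)).symm
  refine ⟨(s1.trans s2).trans (Equiv.swap (s2 (s1 z)) c), ?_, ?_, ?_⟩
  · rw [Equiv.trans_apply, Equiv.trans_apply, h1x, h2a]
    exact Equiv.swap_apply_of_ne_of_ne hz2a.symm hac
  · rw [Equiv.trans_apply, Equiv.trans_apply, h2y]
    exact Equiv.swap_apply_of_ne_of_ne hz2b.symm hbc
  · rw [Equiv.trans_apply, Equiv.trans_apply, Equiv.swap_apply_left]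

lemma fin_succ_mk {m : ℕ} (i : ℕ) (hi' : i < m + 3) (hi : i + 1 < m + 3) :
    ((⟨i, hi'⟩ : Fin (m + 3)) + 1) = ⟨i + 1, hi⟩ := by
  apply Fin.ext
  rw [Fin.add_def]
  simp only [Fin.val_one']
  rw [Nat.mod_eq_of_lt (show 1 < m + 3 by omega)]
  exact Nat.mod_eq_of_lt hi

lemma fin_wrap_mk {m : ℕ} (hi : m + 2 < m + 3) :
    ((⟨m + 2, hi⟩ : Fin (m + 3)) + 1) = 0 := by
  apply Fin.ext
  rw [Fin.add_def]
  simp only [Fin.val_one']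
  rw [Nat.mod_eq_of_lt (show 1 < m + 3 by omega)]
  simp

lemma master {m : ℕ} (𝒢 : Fin (m + 3) → SimpleGraph (Fin (m + 3)))
    (f g : Equiv.Perm (Fin (m + 3)))
    (hc : ∀ t : Fin (m + 3), s(f t, f (t + 1)) ∈ (𝒢 (g t)).edgeSet) :
    HasRainbowHamCycle 𝒢 := by
  obtain ⟨a, l, hal⟩ : ∃ a l, a :: l = (List.finRange (m + 3)).map f := by
    refine ⟨f 0, (List.finRange (m + 2)).map (fun i => f i.succ), ?_⟩
    have h0 : List.finRange (m + 3) = (0 : Fin (m + 3)) :: (List.finRange (m + 2)).map Fin.succ :=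
      List.finRange_succ
    rw [h0, List.map_cons, List.map_map]
    rfl
  have hnd : (a :: l).Nodup := by
    rw [hal]
    exact (List.nodup_finRange (m + 3)).map f.injective
  have hlen : l.length = m + 2 := by
    have := congrArg List.length hal
    simp at this
    omega
  have hL : ∀ (i : ℕ) (hi : i < m + 3),
      (a :: l)[i]'(by rw [List.length_cons, hlen]; omega) = f ⟨i, hi⟩ := by
    intro i hi
    have h1 := List.getElem_of_eq hal (show i < (a :: l).length by
      rw [List.length_cons, hlen]; omega)
    rw [h1, List.getElem_map]
    congr 1
    simp
  have ha : a = f 0 := by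
    have := hL 0 (by omega)
    simpa using this
  have hM : ∀ (i : ℕ) (hi : i < m + 3),
      (l ++ [a])[i]'(by rw [List.length_append, hlen, List.length_singleton]; omega) = f (⟨i, hi⟩ + 1) := by
    intro i hi
    by_cases hcase : i < m + 2
    · rw [List.getElem_append_left (by omega)]
      have h2 := hL (i + 1) (by omega)
      rw [fin_succ_mk i hi (by omega)]
      rw [← h2]
      simp
    · have hi2 : i = m + 2 := by omega
      subst hi2
      rw [List.getElem_append_right (by omega)]
      rw [fin_wrap_mk]
      simp [hlen, ha]
  have hchain : List.Chain (⊤ : SimpleGraph (Fin (m + 3))).Adj a (l ++ [a]) := by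
    rw [List.chain_iff_get]
    have hlen2 : (l ++ [a]).length = m + 3 := by
      rw [List.length_append, hlen]; simp
    constructor
    · intro h0
      rw [List.get_eq_getElem]
      rw [hM 0 (by omega)]
      rw [fin_succ_mk 0 (by omega) (by omega)]
      rw [top_adj]
      intro heq
      have heq' : f 0 = f ⟨0 + 1, by omega⟩ := ha.symm.trans heq
      have h3 := f.injective heq'
      rw [Fin.ext_iff] at h3
      simp at h3
    · intro i hi
      rw [hlen2] at hi
      simp only [List.get_eq_getElem]
      rw [hM i (by omega : i < m + 3), hM (i + 1) (by omega : i + 1 < m + 3)]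
      rw [top_adj]
      intro heq
      have h3 := add_right_cancel (f.injective heq)
      rw [Fin.ext_iff] at h3
      simp at h3
  have hcyc : (walkFrom ⊤ a l a hchain).IsCycle :=
    isCycle_walkFrom a l hchain hnd (by omega)
  have hham : (walkFrom ⊤ a l a hchain).IsHamiltonianCycle := by
    rw [Walk.isHamiltonianCycle_iff_isCycle_and_support_count_tail_eq_one]
    refine ⟨hcyc, ?_⟩
    intro x
    rw [support_walkFrom]
    simp only [List.tail_cons]
    have hperm : (l ++ [a]).Perm (a :: l) := List.perm_append_comm.trans (by rfl)
    apply List.count_eq_one_of_mem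
    · exact hperm.nodup_iff.mpr hnd
    · have hx : x ∈ a :: l := by
        rw [hal]
        have h4 : x = f (f.symm x) := (f.apply_symm_apply x).symm
        rw [h4]
        exact List.mem_map_of_mem (f := f) (List.mem_finRange _)
      exact hperm.mem_iff.mpr hx
  have hedlen : (walkFrom ⊤ a l a hchain).edges.length = m + 3 := by
    rw [edges_walkFrom]
    rw [List.length_zipWith]
    rw [List.length_cons, List.length_append, hlen]
    simp
  refine ⟨a, walkFrom ⊤ a l a hchain, hham, fun i => g ⟨i.1, lt_of_lt_of_eq i.2 hedlen⟩, ?_, ?_⟩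
  · intro i j hij
    have h5 := g.injective hij
    rw [Fin.ext_iff] at h5 ⊢
    exact h5
  · intro i
    have hi : (i : ℕ) < m + 3 := lt_of_lt_of_eq i.2 hedlen
    rw [List.get_eq_getElem]
    have he := edges_walkFrom (G := (⊤ : SimpleGraph (Fin (m + 3)))) a l a hchain
    have h6 := List.getElem_of_eq he (i.2 : (i:ℕ) < (walkFrom ⊤ a l a hchain).edges.length)
    rw [h6, List.getElem_zipWith]
    rw [hL (i:ℕ) hi, hM (i:ℕ) hi]
    exact hc ⟨i, hi⟩

lemma caseA {m : ℕ} (𝒢 : Fin (m + 3) → SimpleGraph (Fin (m + 3)))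
    (P D : Fin (m + 3) → Fin (m + 3))
    (hadj : ∀ i x y, (𝒢 i).Adj x y ↔ x ≠ y ∧ (x = D i ∨ y = D i ∨ (x ≠ P i ∧ y ≠ P i)))
    (hDP : ∀ i, D i ≠ P i) (hPall : ∀ i j, P i = P j)
    (i0 j0 : Fin (m + 3)) (hD : D i0 ≠ D j0) :
    HasRainbowHamCycle 𝒢 := by
  have hij : i0 ≠ j0 := fun hcon => hD (congrArg D hcon)
  have hpd0 : P i0 ≠ D i0 := (hDP i0).symm
  have hpd1 : P i0 ≠ D j0 := by rw [hPall i0 j0]; exact (hDP j0).symm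
  obtain ⟨f, hf0, hf1, hfl⟩ := exists_perm3 (x := (0 : Fin (m + 3))) (y := 1) (z := -1)
    fin01 fin0last fin1last hpd0 hpd1 hD
  obtain ⟨g, hg0, hgl⟩ := exists_perm2 (x := (0 : Fin (m + 3))) (y := -1) fin0last hij
  apply master 𝒢 f g
  intro t
  rw [SimpleGraph.mem_edgeSet, hadj]
  by_cases ht0 : t = 0
  · subst ht0
    rw [zero_add, hf0, hf1, hg0]
    exact ⟨hpd0, Or.inr (Or.inl rfl)⟩
  by_cases htl : t = -1
  · subst htl
    rw [neg_add_cancel, hf0, hfl, hgl]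
    exact ⟨hpd1.symm, Or.inl rfl⟩
  · refine ⟨fun hcon => fin_tne t (f.injective hcon), Or.inr (Or.inr ⟨?_, ?_⟩)⟩
    · rw [hPall (g t) i0, ← hf0]
      exact fun hcon => ht0 (f.injective hcon)
    · rw [hPall (g t) i0, ← hf0]
      intro hcon
      exact htl (fin_tsucc (f.injective hcon))

/- ### Case B1 : all pendant vertices but one equal -/

lemma caseB1 {m : ℕ} (hm : 1 ≤ m) (𝒢 : Fin (m + 3) → SimpleGraph (Fin (m + 3)))
    (P D : Fin (m + 3) → Fin (m + 3))
    (hadj : ∀ i x y, (𝒢 i).Adj x y ↔ x ≠ y ∧ (x = D i ∨ y = D i ∨ (x ≠ P i ∧ y ≠ P i)))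
    (hDP : ∀ i, D i ≠ P i) (q j : Fin (m + 3)) (hPj : P j ≠ q)
    (hall : ∀ k, k ≠ j → P k = q) :
    HasRainbowHamCycle 𝒢 := by
  obtain ⟨k0, hk0⟩ := exists_ne j
  have hPk0 : P k0 = q := hall k0 hk0
  have hqD : q ≠ D k0 := by rw [← hPk0]; exact (hDP k0).symm
  obtain ⟨w, hw⟩ : ∃ w : Fin (m + 3), w ≠ q ∧ w ≠ D k0 ∧ w ≠ P j := by
    by_contra hcon
    push_neg at hcon
    have hsub : (Finset.univ : Finset (Fin (m + 3))) ⊆ {q, D k0, P j} := by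
      intro x _
      simp only [Finset.mem_insert, Finset.mem_singleton]
      by_cases h1 : x = q
      · exact Or.inl h1
      by_cases h2 : x = D k0
      · exact Or.inr (Or.inl h2)
      · exact Or.inr (Or.inr (hcon x h1 h2))
    have hc1 := Finset.card_le_card hsub
    have hc2 : ({q, D k0, P j} : Finset (Fin (m + 3))).card ≤ 3 := by
      refine le_trans (Finset.card_insert_le _ _) ?_
      have := Finset.card_insert_le (D k0) ({P j} : Finset (Fin (m + 3)))
      simp only [Finset.card_singleton] at this ⊢
      omega
    rw [Finset.card_univ, Fintype.card_fin] at hc1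
    omega
  obtain ⟨f, hf0, hf1, hfl⟩ := exists_perm3 (x := (0 : Fin (m + 3))) (y := 1) (z := -1)
    fin01 fin0last fin1last hqD hw.1.symm (fun hcon => hw.2.1 hcon.symm)
  obtain ⟨g, hg0, hgl⟩ := exists_perm2 (x := (0 : Fin (m + 3))) (y := -1) fin0last hk0
  apply master 𝒢 f g
  intro t
  rw [SimpleGraph.mem_edgeSet, hadj]
  by_cases ht0 : t = 0
  · subst ht0
    rw [zero_add, hf0, hf1, hg0]
    exact ⟨hqD, Or.inr (Or.inl rfl)⟩
  by_cases htl : t = -1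
  · subst htl
    rw [neg_add_cancel, hf0, hfl, hgl]
    exact ⟨hw.1, Or.inr (Or.inr ⟨hw.2.2, fun hcon => hPj hcon.symm⟩)⟩
  · have hgt : P (g t) = q := by
      apply hall
      intro hcon
      apply htl
      apply g.injective
      rw [hgl, hcon]
    refine ⟨fun hcon => fin_tne t (f.injective hcon), Or.inr (Or.inr ⟨?_, ?_⟩)⟩
    · rw [hgt, ← hf0]
      exact fun hcon => ht0 (f.injective hcon)
    · rw [hgt, ← hf0]
      intro hcon
      exact htl (fin_tsucc (f.injective hcon))

lemma caseB2 {m : ℕ} (hm : 1 ≤ m) (𝒢 : Fin (m + 3) → SimpleGraph (Fin (m + 3)))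
    (P D : Fin (m + 3) → Fin (m + 3))
    (hadj : ∀ i x y, (𝒢 i).Adj x y ↔ x ≠ y ∧ (x = D i ∨ y = D i ∨ (x ≠ P i ∧ y ≠ P i)))
    (hfib : ∀ v, (Finset.univ.filter (fun k => P k = v)).card ≤ m + 1)
    (i0 j0 : Fin (m + 3)) (hne : P i0 ≠ P j0) :
    HasRainbowHamCycle 𝒢 := by
  obtain ⟨f, hf0, hf2⟩ := exists_perm2 (x := (0 : Fin (m + 3))) (y := 2) fin02 hne
  set T : Fin (m + 3) → Finset (Fin (m + 3)) :=
    fun k => Finset.univ.filter (fun t => P k ≠ f t ∧ P k ≠ f (t + 1)) with hT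
  have hcompl : ∀ (S : Finset (Fin (m + 3))) (t k), k ∈ S → t ∉ S.biUnion T →
      t = f.symm (P k) ∨ t + 1 = f.symm (P k) := by
    intro S t k hk ht
    have h1 : t ∉ T k := fun hmem => ht (Finset.mem_biUnion.mpr ⟨k, hk, hmem⟩)
    rw [hT] at h1
    simp only [Finset.mem_filter, Finset.mem_univ, true_and] at h1
    push_neg at h1
    by_cases he : P k = f t
    · left; rw [he, Equiv.symm_apply_apply]
    · right; rw [h1 he, Equiv.symm_apply_apply]
  have hall : ∀ S : Finset (Fin (m + 3)), S.card ≤ (S.biUnion T).card := by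
    intro S
    by_cases hij : i0 ∈ S ∧ j0 ∈ S
    · have huniv : S.biUnion T = Finset.univ := by
        apply Finset.eq_univ_of_forall
        intro t
        by_contra ht
        have h1 := hcompl S t i0 hij.1 ht
        have h2 := hcompl S t j0 hij.2 ht
        have e0 : f.symm (P i0) = 0 := by rw [← hf0, Equiv.symm_apply_apply]
        have e2 : f.symm (P j0) = 2 := by rw [← hf2, Equiv.symm_apply_apply]
        rw [e0] at h1
        rw [e2] at h2
        rcases h1 with h1 | h1 <;> rcases h2 with h2 | h2
        · rw [h1] at h2; exact fin02 h2
        · rw [h1, zero_add] at h2; exact fin12 h2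
        · rw [h2] at h1
          have h3 := congrArg (· + 1) (fin_tsucc h1)
          simp only [neg_add_cancel, two_add_one_eq_three] at h3
          have h4 := congrArg Fin.val h3
          rw [Fin.val_add, finv2, finv1, Nat.mod_eq_of_lt (by omega : 2 + 1 < m + 3)] at h4
          simp at h4
        · rw [h1] at h2; exact fin02 h2
      rw [huniv, Finset.card_univ]
      exact Finset.card_le_univ S
    · have hSlt : S.card ≤ m + 2 := by
        have hne' : S ≠ Finset.univ := by
          intro hcon
          exact hij ⟨hcon ▸ Finset.mem_univ i0, hcon ▸ Finset.mem_univ j0⟩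
        have := Finset.card_lt_card (Finset.ssubset_univ_iff.mpr hne')
        rw [Finset.card_univ, Fintype.card_fin] at this
        omega
      have hcompl_card := Finset.card_compl (S.biUnion T)
      rw [Fintype.card_fin] at hcompl_card
      have htot := Finset.card_le_univ (S.biUnion T)
      rw [Fintype.card_fin] at htot
      by_cases hsame : ∀ k1 ∈ S, ∀ k2 ∈ S, P k1 = P k2
      · rcases Finset.eq_empty_or_nonempty S with rfl | ⟨k0, hk0⟩
        · simp
        · have hS2 : S.card ≤ m + 1 := by
            refine le_trans (Finset.card_le_card ?_) (hfib (P k0))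
            intro k hk
            simp only [Finset.mem_filter]
            exact ⟨Finset.mem_univ k, hsame k hk k0 hk0⟩
          have hsub : (S.biUnion T)ᶜ ⊆ {f.symm (P k0), f.symm (P k0) - 1} := by
            intro t ht
            rw [Finset.mem_compl] at ht
            rcases hcompl S t k0 hk0 ht with h | h
            · rw [h]; exact Finset.mem_insert_self _ _
            · refine Finset.mem_insert_of_mem ?_
              rw [Finset.mem_singleton]
              exact eq_sub_of_add_eq h
          have h2 : (S.biUnion T)ᶜ.card ≤ 2 := by
            refine le_trans (Finset.card_le_card hsub) ?_
            refine le_trans (Finset.card_insert_le _ _) ?_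
            simp
          omega
      · push_neg at hsame
        obtain ⟨k1, hk1, k2, hk2, h12⟩ := hsame
        have hs12 : f.symm (P k1) ≠ f.symm (P k2) := fun hcon => h12 (f.symm.injective hcon)
        have H : ∀ u, u ∉ S.biUnion T →
            (u = f.symm (P k1) ∧ u + 1 = f.symm (P k2)) ∨
            (u = f.symm (P k2) ∧ u + 1 = f.symm (P k1)) := by
          intro u hu
          rcases hcompl S u k1 hk1 hu with h1 | h1 <;> rcases hcompl S u k2 hk2 hu with h2 | h2
          · exact absurd (h1.symm.trans h2) hs12
          · exact Or.inl ⟨h1, h2⟩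
          · exact Or.inr ⟨h2, h1⟩
          · exact absurd (h1.symm.trans h2) hs12
        have hcard1 : (S.biUnion T)ᶜ.card ≤ 1 := by
          rw [Finset.card_le_one]
          intro t ht t' ht'
          rw [Finset.mem_compl] at ht ht'
          have htwo : ¬ ((1 : Fin (m + 3)) + 1 = 0) := by
            intro h'; have h'' := congrArg Fin.val h'
            rw [Fin.val_add, finv1, Nat.mod_eq_of_lt (by omega : 1 + 1 < m + 3)] at h''; simp at h''
          rcases H t ht with ⟨ha1, ha2⟩ | ⟨ha1, ha2⟩ <;>
            rcases H t' ht' with ⟨hb1, hb2⟩ | ⟨hb1, hb2⟩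
          · rw [ha1, hb1]
          · exfalso
            have e1 : t' = t + 1 := by rw [hb1, ← ha2]
            have e2 : t = t' + 1 := by rw [ha1, ← hb2]
            rw [e1, add_assoc] at e2
            exact htwo (left_eq_add.mp e2)
          · exfalso
            have e1 : t' = t + 1 := by rw [hb1, ← ha2]
            have e2 : t = t' + 1 := by rw [ha1, ← hb2]
            rw [e1, add_assoc] at e2
            exact htwo (left_eq_add.mp e2)
          · rw [ha1, hb1]
        omega
  obtain ⟨F, hFinj, hF⟩ := (Finset.all_card_le_biUnion_card_iff_existsInjective' T).mp hall
  have hFbij : Function.Bijective F := Finite.injective_iff_bijective.mp hFinj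
  set g : Equiv.Perm (Fin (m + 3)) := (Equiv.ofBijective F hFbij).symm with hg
  apply master 𝒢 f g
  intro t
  rw [SimpleGraph.mem_edgeSet, hadj]
  have hFg : F (g t) = t := (Equiv.ofBijective F hFbij).apply_symm_apply t
  have hmem := hF (g t)
  rw [hT] at hmem
  simp only [Finset.mem_filter, Finset.mem_univ, true_and] at hmem
  rw [hFg] at hmem
  exact ⟨fun hcon => fin_tne t (f.injective hcon),
    Or.inr (Or.inr ⟨fun hcon => hmem.1 hcon.symm, fun hcon => hmem.2 hcon.symm⟩)⟩

end RainbowAux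

/-- A family of graphs each isomorphic to `K_1 ∨ (K_{n-2} ∪ K_1)` admits a rainbow
Hamiltonian cycle unless all its members are equal as labeled graphs. -/
theorem rainbow_extremal_family {n : ℕ} (hn : 4 ≤ n)
    (𝒢 : Fin n → SimpleGraph (Fin n))
    (h : ∀ i, Nonempty (𝒢 i ≃g Gstar n)) :
    HasRainbowHamCycle 𝒢 ∨ ∀ i j, 𝒢 i = 𝒢 j := by
  obtain ⟨m, rfl⟩ : ∃ m, n = m + 3 := ⟨n - 3, by omega⟩
  have hm : 1 ≤ m := by omega
  set E : ∀ i, 𝒢 i ≃g Gstar (m + 3) := fun i => (h i).some with hE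
  set P : Fin (m + 3) → Fin (m + 3) := fun i => (E i).symm ⟨m + 2, by omega⟩ with hP
  set D : Fin (m + 3) → Fin (m + 3) := fun i => (E i).symm 0 with hD
  have hEP : ∀ i, (E i) (P i) = ⟨m + 2, by omega⟩ := fun i => (E i).apply_symm_apply _
  have hED : ∀ i, (E i) (D i) = 0 := fun i => (E i).apply_symm_apply _
  have hadj : ∀ i x y, (𝒢 i).Adj x y ↔
      x ≠ y ∧ (x = D i ∨ y = D i ∨ (x ≠ P i ∧ y ≠ P i)) := by
    intro i x y
    rw [← SimpleGraph.Iso.map_adj_iff (E i)]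
    show ((E i) x ≠ (E i) y ∧ (((E i) x).val = 0 ∨ ((E i) y).val = 0 ∨
      (((E i) x).val ≠ (m + 3) - 1 ∧ ((E i) y).val ≠ (m + 3) - 1))) ↔ _
    have hval0 : ∀ u : Fin (m + 3), ((E i) u).val = 0 ↔ u = D i := by
      intro u
      constructor
      · intro hv
        have h1 : (E i) u = 0 := Fin.ext hv
        have h2 := congrArg (E i).symm h1
        rw [RelIso.symm_apply_apply] at h2
        exact h2
      · intro hu
        rw [hu, hED]
        rfl
    have hvall : ∀ u : Fin (m + 3), ((E i) u).val = (m + 3) - 1 ↔ u = P i := by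
      intro u
      constructor
      · intro hv
        have h1 : (E i) u = ⟨m + 2, by omega⟩ := Fin.ext (by rw [hv]; simp)
        have h2 := congrArg (E i).symm h1
        rw [RelIso.symm_apply_apply] at h2
        exact h2
      · intro hu
        rw [hu, hEP i]
        simp
    have hinj : (E i) x = (E i) y ↔ x = y := by
      constructor
      · intro h1
        have h2 := congrArg (E i).symm h1
        rwa [RelIso.symm_apply_apply, RelIso.symm_apply_apply] at h2
      · intro h1; rw [h1]
    constructor
    · rintro ⟨h1, h2⟩
      refine ⟨fun hc => h1 (hinj.mpr hc), ?_⟩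
      rcases h2 with h2 | h2 | ⟨h2, h3⟩
      · exact Or.inl ((hval0 x).mp h2)
      · exact Or.inr (Or.inl ((hval0 y).mp h2))
      · exact Or.inr (Or.inr ⟨fun hc => h2 ((hvall x).mpr hc), fun hc => h3 ((hvall y).mpr hc)⟩)
    · rintro ⟨h1, h2⟩
      refine ⟨fun hc => h1 (hinj.mp hc), ?_⟩
      rcases h2 with h2 | h2 | ⟨h2, h3⟩
      · exact Or.inl ((hval0 x).mpr h2)
      · exact Or.inr (Or.inl ((hval0 y).mpr h2))
      · exact Or.inr (Or.inr ⟨fun hc => h2 ((hvall x).mp hc), fun hc => h3 ((hvall y).mp hc)⟩)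
  have hDP : ∀ i, D i ≠ P i := by
    intro i hcon
    have h1 := congrArg (E i) hcon
    rw [hED, hEP] at h1
    have h2 := congrArg Fin.val h1
    simp at h2
  by_cases hPall : ∀ i j, P i = P j
  · by_cases hDall : ∀ i j, D i = D j
    · right
      intro i j
      apply SimpleGraph.ext
      ext x y
      rw [hadj i x y, hadj j x y, hPall i j, hDall i j]
    · left
      push_neg at hDall
      obtain ⟨i0, j0, hD0⟩ := hDall
      exact RainbowAux.caseA 𝒢 P D hadj hDP hPall i0 j0 hD0
  · left
    push_neg at hPall
    obtain ⟨i0, j0, hne⟩ := hPall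
    by_cases hbig : ∃ v, m + 2 ≤ (Finset.univ.filter (fun k => P k = v)).card
    · obtain ⟨v, hv⟩ := hbig
      have hvlt : (Finset.univ.filter (fun k => P k = v)).card ≤ m + 2 := by
        by_contra hcon
        push_neg at hcon
        have h1 : (Finset.univ.filter (fun k => P k = v)).card = m + 3 := by
          have := Finset.card_le_univ (Finset.univ.filter (fun k => P k = v))
          rw [Fintype.card_fin] at this
          omega
        have h2 : (Finset.univ.filter (fun k => P k = v)) = Finset.univ := by
          apply Finset.eq_univ_of_card
          rw [h1, Fintype.card_fin]
        have h3 : ∀ k, P k = v := by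
          intro k
          have := h2 ▸ Finset.mem_univ k
          exact (Finset.mem_filter.mp this).2
        exact hne ((h3 i0).trans (h3 j0).symm)
      have hveq : (Finset.univ.filter (fun k => P k = v)).card = m + 2 := le_antisymm hvlt hv
      have hcompl : (Finset.univ.filter (fun k => P k = v))ᶜ.card = 1 := by
        rw [Finset.card_compl, Fintype.card_fin, hveq]
        omega
      obtain ⟨j, hj⟩ := Finset.card_eq_one.mp hcompl
      have hPj : P j ≠ v := by
        have : j ∈ (Finset.univ.filter (fun k => P k = v))ᶜ := by
          rw [hj]; exact Finset.mem_singleton_self j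
        rw [Finset.mem_compl, Finset.mem_filter] at this
        intro hcon
        exact this ⟨Finset.mem_univ j, hcon⟩
      have hall : ∀ k, k ≠ j → P k = v := by
        intro k hk
        by_contra hcon
        have : k ∈ (Finset.univ.filter (fun k => P k = v))ᶜ := by
          rw [Finset.mem_compl, Finset.mem_filter]
          intro hmem
          exact hcon hmem.2
        rw [hj, Finset.mem_singleton] at this
        exact hk this
      exact RainbowAux.caseB1 hm 𝒢 P D hadj hDP v j hPj hall
    · push_neg at hbig
      have hfib : ∀ v, (Finset.univ.filter (fun k => P k = v)).card ≤ m + 1 := by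
        intro v
        have := hbig v
        omega
      exact RainbowAux.caseB2 hm 𝒢 P D hadj hfib i0 j0 hne
end
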